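/- arXiv:2003.00462 — 8 statements merged into one kernel-verified Lean document; each statement's English description precedes it below -/
import Mathlib

section
/- Every element x of the string group L(p) can be written uniquely in the normal form x = Σ_{i=1}^t l_i x_i + l c, where 0 ≤ l_i ≤ p_i − 1 for each i and l ∈ ℤ. -/
/-!
The relation subgroup of `ℤ^ι` consists of the vectors `(mᵢ pᵢ)ᵢ` with `∑ mᵢ = 0`, so the map
`v ↦ (v mod p, ∑ ⌊vᵢ / pᵢ⌋)` on representatives is constant on cosets. It sends the representative
`L + l p₀ e₀` of `∑ Lᵢ xᵢ + l c` back to `(L, l)` when `0 ≤ Lᵢ < pᵢ`, which gives uniqueness.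
Existence is division with remainder: `vᵢ xᵢ = (vᵢ mod pᵢ) xᵢ + ⌊vᵢ / pᵢ⌋ c`, since `pᵢ xᵢ = c` for all `i`.
-/

open scoped BigOperators

def stringRelators {ι : Type} [DecidableEq ι] (p : ι → ℕ) : Set (ι → ℤ) :=
  { v | ∃ i j : ι, v = (p i : ℤ) • Pi.single i 1 - (p j : ℤ) • Pi.single j 1 }

abbrev StringGroup {ι : Type} [DecidableEq ι] (p : ι → ℕ) : Type :=
  (ι → ℤ) ⧸ AddSubgroup.closure (stringRelators p)

def xgen {ι : Type} [DecidableEq ι] (p : ι → ℕ) (i : ι) : StringGroup p :=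
  QuotientAddGroup.mk (Pi.single i 1)

def canon {ι : Type} [DecidableEq ι] (p : ι → ℕ) (i : ι) : StringGroup p :=
  (p i : ℤ) • xgen p i

open Finset

namespace StringGroup

variable {ι : Type} [DecidableEq ι] (p : ι → ℕ)

theorem canon_eq_canon (i j : ι) : canon p i = canon p j := by
  rw [canon, canon, xgen, xgen, ← QuotientAddGroup.mk_zsmul, ← QuotientAddGroup.mk_zsmul,
    QuotientAddGroup.eq, ← sub_eq_neg_add, ← neg_mem_iff, neg_sub]
  exact AddSubgroup.subset_closure ⟨i, j, rfl⟩

variable [Fintype ι]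

theorem exists_mul_of_mem_closure_stringRelators {v : ι → ℤ}
    (hv : v ∈ AddSubgroup.closure (stringRelators p)) :
    ∃ m : ι → ℤ, (∀ i, v i = m i * p i) ∧ ∑ i, m i = 0 := by
  induction hv using AddSubgroup.closure_induction with
  | mem v hv =>
    obtain ⟨i, j, rfl⟩ := hv
    refine ⟨Pi.single i 1 - Pi.single j 1, fun k => ?_, ?_⟩
    · simp only [Pi.sub_apply, Pi.smul_apply, Pi.single_apply, smul_eq_mul]
      split_ifs <;> simp_all
    · simp [sum_sub_distrib]
  | zero => exact ⟨0, by simp, by simp⟩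
  | add v w _ _ hv hw =>
    obtain ⟨m, hvm, hm⟩ := hv
    obtain ⟨n, hwn, hn⟩ := hw
    exact ⟨m + n, fun i => by simp [hvm, hwn, add_mul], by simp [sum_add_distrib, hm, hn]⟩
  | neg v _ hv =>
    obtain ⟨m, hvm, hm⟩ := hv
    exact ⟨-m, fun i => by simp [hvm], by simp [hm]⟩

def normalForm (v : ι → ℤ) : (ι → ℤ) × ℤ :=
  (fun i => v i % p i, ∑ i, v i / p i)

theorem normalForm_add_of_mem_closure {p : ι → ℕ} (hp : ∀ i, p i ≠ 0) (w : ι → ℤ) {v : ι → ℤ}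
    (hv : v ∈ AddSubgroup.closure (stringRelators p)) :
    normalForm p (w + v) = normalForm p w := by
  obtain ⟨m, hvm, hm⟩ := exists_mul_of_mem_closure_stringRelators p hv
  have hp' : ∀ i, (p i : ℤ) ≠ 0 := fun i => by exact_mod_cast hp i
  simp only [normalForm, Pi.add_apply, hvm, Int.add_mul_emod_self_right,
    Int.add_mul_ediv_right _ _ (hp' _), sum_add_distrib, hm, add_zero]

theorem normalForm_eq_of_mk_eq {p : ι → ℕ} (hp : ∀ i, p i ≠ 0) {v w : ι → ℤ}
    (h : (v : StringGroup p) = w) : normalForm p v = normalForm p w := by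
  rw [← normalForm_add_of_mem_closure hp v (QuotientAddGroup.eq.mp h), add_neg_cancel_left]

theorem mk_eq_sum_zsmul_xgen (v : ι → ℤ) : (v : StringGroup p) = ∑ i, v i • xgen p i := by
  change QuotientAddGroup.mk' _ v = _
  conv_lhs => rw [← univ_sum_single v]
  simp only [map_sum, xgen, ← QuotientAddGroup.mk_zsmul, ← Pi.single_smul', smul_eq_mul, mul_one]
  rfl

theorem sum_zsmul_xgen_add_zsmul_canon_eq_mk (L : ι → ℤ) (l : ℤ) (i₀ : ι) :
    ∑ i, L i • xgen p i + l • canon p i₀ =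
      ((L + (l * p i₀) • Pi.single i₀ 1 : ι → ℤ) : StringGroup p) := by
  rw [QuotientAddGroup.mk_add, mk_eq_sum_zsmul_xgen, QuotientAddGroup.mk_zsmul, mul_smul]
  rfl

theorem mk_eq_sum_emod_add_sum_ediv (v : ι → ℤ) (i₀ : ι) :
    (v : StringGroup p) = ∑ i, (v i % p i) • xgen p i + (∑ i, v i / p i) • canon p i₀ := by
  have hsplit : ∀ i, v i • xgen p i = (v i % p i) • xgen p i + (v i / p i) • canon p i₀ := by
    intro i
    rw [← canon_eq_canon p i, canon, smul_smul, ← add_zsmul, Int.emod_add_ediv_mul]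
  rw [mk_eq_sum_zsmul_xgen, sum_smul (M := StringGroup p), ← sum_add_distrib]
  exact sum_congr rfl fun i _ => hsplit i

theorem normalForm_add_mul_smul_single {p : ι → ℕ} (L : ι → ℤ) (l : ℤ) (i₀ : ι)
    (hL : ∀ i, 0 ≤ L i ∧ L i < p i) :
    normalForm p (L + (l * p i₀) • Pi.single i₀ 1) = (L, l) := by
  have hcomp : ∀ i, (L + (l * p i₀) • Pi.single i₀ 1 : ι → ℤ) i =
      L i + (Pi.single i₀ l : ι → ℤ) i * p i := by
    intro i
    rcases eq_or_ne i i₀ with rfl | hi <;> simp [*, mul_comm]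
  have hp : ∀ i, (p i : ℤ) ≠ 0 := fun i => by linarith [hL i]
  simp only [normalForm, hcomp, Int.add_mul_emod_self_right, Int.emod_eq_of_lt (hL _).1 (hL _).2,
    Int.add_mul_ediv_right _ _ (hp _), Int.ediv_eq_zero_of_lt (hL _).1 (hL _).2, zero_add,
    sum_pi_single', mem_univ, if_true]

end StringGroup

theorem stmt1 {t : ℕ} (p : Fin (t+1) → ℕ) (hp : ∀ i, 2 ≤ p i)
    (x : StringGroup p) :
    ∃! lm : (Fin (t+1) → ℤ) × ℤ,
      (∀ i, 0 ≤ lm.1 i ∧ lm.1 i ≤ (p i : ℤ) - 1) ∧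
      x = ∑ i, lm.1 i • xgen p i + lm.2 • canon p 0 := by
  have hp_pos : ∀ i, (0 : ℤ) < p i := fun i => by have := hp i; omega
  obtain ⟨v, rfl⟩ := QuotientAddGroup.mk_surjective x
  refine ⟨StringGroup.normalForm p v,
    ⟨fun i => ?_, StringGroup.mk_eq_sum_emod_add_sum_ediv p v 0⟩, ?_⟩
  · have := Int.emod_lt_of_pos (v i) (hp_pos i)
    exact ⟨Int.emod_nonneg _ (hp_pos i).ne', by simp only [StringGroup.normalForm]; omega⟩
  rintro ⟨L, l⟩ ⟨hL, hv⟩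
  rw [StringGroup.sum_zsmul_xgen_add_zsmul_canon_eq_mk] at hv
  have hL_lt : ∀ i, 0 ≤ L i ∧ L i < p i := fun i => ⟨(hL i).1, by linarith [(hL i).2]⟩
  rw [← StringGroup.normalForm_add_mul_smul_single L l 0 hL_lt,
    StringGroup.normalForm_eq_of_mk_eq (fun i => by have := hp i; omega) hv]
end

section
/- If π: L(p) → L(q) is an admissible homomorphism, then its kernel is a subgroup of the torsion subgroup of L(p); in particular ker π is finite. -/
open scoped BigOperators

section Aux
variable {ι : Type} [Fintype ι] [DecidableEq ι] (p : ι → ℕ)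

/-- The quotient map as an `AddMonoidHom`. -/
def mkS : (ι → ℤ) →+ StringGroup p := QuotientAddGroup.mk' _

def Pbig : ℕ := ∏ i, p i

lemma p_dvd_Pbig (i : ι) : p i ∣ Pbig p := Finset.dvd_prod_of_mem p (Finset.mem_univ i)

lemma Pdiv_mul (i : ι) : ((Pbig p / p i : ℕ) : ℤ) * (p i : ℤ) = (Pbig p : ℤ) := by
  have := Nat.div_mul_cancel (p_dvd_Pbig p i)
  exact_mod_cast congrArg (Nat.cast : ℕ → ℤ) this

/-- Degree on representatives. -/
def degPre : (ι → ℤ) →+ ℤ :=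
  AddMonoidHom.mk' (fun v => ∑ i, ((Pbig p / p i : ℕ) : ℤ) * v i) (by
    intro a b
    simp [mul_add, Finset.sum_add_distrib])

lemma degPre_single (i : ι) (c : ℤ) : degPre p (c • Pi.single i 1) = ((Pbig p / p i : ℕ) : ℤ) * c := by
  simp only [degPre, AddMonoidHom.mk'_apply, Pi.smul_apply, Pi.single_apply, smul_eq_mul]
  rw [Finset.sum_eq_single i] <;> simp (config := {contextual := true}) [eq_comm]

lemma degPre_relator {v : ι → ℤ} (hv : v ∈ stringRelators p) : degPre p v = 0 := by
  obtain ⟨i, j, rfl⟩ := hv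
  rw [map_sub, degPre_single, degPre_single, Pdiv_mul, Pdiv_mul, sub_self]

/-- The degree homomorphism on the string group. -/
def deg : StringGroup p →+ ℤ :=
  QuotientAddGroup.lift _ (degPre p) ((AddSubgroup.closure_le _).mpr fun v hv =>
    AddMonoidHom.mem_ker.mpr (degPre_relator p hv))

lemma deg_mk (v : ι → ℤ) : deg p (mkS p v) = degPre p v := rfl

lemma mem_closure_sum (m : ι → ℤ) (i0 : ι) :
    (∑ i, m i • ((p i : ℤ) • Pi.single i 1 - (p i0 : ℤ) • Pi.single i0 1))
      ∈ AddSubgroup.closure (stringRelators p) :=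
  AddSubgroup.sum_mem _ fun i _ =>
    AddSubgroup.zsmul_mem _
      (AddSubgroup.subset_closure (show _ ∈ stringRelators p from ⟨i, i0, rfl⟩)) _

lemma sum_relator_eq (m : ι → ℤ) (i0 : ι) :
    ∑ i, m i • ((p i : ℤ) • Pi.single i 1 - (p i0 : ℤ) • Pi.single i0 1)
      = (fun i => m i * p i) - ((∑ i, m i) * p i0) • Pi.single i0 1 := by
  funext j
  simp only [Finset.sum_apply, Pi.smul_apply, Pi.sub_apply, Pi.single_apply, smul_eq_mul,
    mul_sub, mul_ite, mul_one, mul_zero, Finset.sum_sub_distrib]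
  rw [Finset.sum_eq_single j]
  · simp only [if_pos rfl]
    by_cases h : j = i0 <;> simp [h, Finset.sum_mul, mul_assoc, mul_comm]
  · intro b _ hb
    simp [if_neg (Ne.symm hb).symm, hb, Ne.symm hb]
  · simp

lemma mkS_eq_of_sub_mem (v w : ι → ℤ)
    (h : v - w ∈ AddSubgroup.closure (stringRelators p)) : mkS p v = mkS p w := by
  exact (QuotientAddGroup.eq_iff_sub_mem).mpr h

/-- Normal form: every class equals `∑ lᵢ • xᵢ + m • c`. -/
lemma mk_normal_form (v : ι → ℤ) (i0 : ι) :
    mkS p v = ∑ i, (v i % (p i : ℤ)) • xgen p i + (∑ i, v i / (p i : ℤ)) • canon p i0 := by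
  have hr : (∑ i, (v i % (p i : ℤ)) • xgen p i + (∑ i, v i / (p i : ℤ)) • canon p i0)
      = mkS p (∑ i, (v i % (p i : ℤ)) • Pi.single i 1
          + (∑ i, v i / (p i : ℤ)) • ((p i0 : ℤ) • Pi.single i0 1)) := by
    simp only [map_add, map_sum, map_zsmul]
    rfl
  rw [hr]
  apply mkS_eq_of_sub_mem
  have key := sum_relator_eq p (fun i => v i / (p i : ℤ)) i0
  have hv : v - (∑ i, (v i % (p i : ℤ)) • Pi.single i 1
        + (∑ i, v i / (p i : ℤ)) • ((p i0 : ℤ) • Pi.single i0 1))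
      = ∑ i, (v i / (p i : ℤ)) • ((p i : ℤ) • Pi.single i 1 - (p i0 : ℤ) • Pi.single i0 1) := by
    rw [key]
    funext j
    simp only [Pi.sub_apply, Pi.add_apply, Finset.sum_apply, Pi.smul_apply, Pi.single_apply,
      smul_eq_mul, mul_ite, mul_one, mul_zero]
    rw [Finset.sum_ite_eq Finset.univ j fun i => v i % (p i : ℤ)]
    simp only [Finset.mem_univ, if_true]
    by_cases h : j = i0
    · subst h
      simp only [if_pos rfl]
      linarith [Int.mul_ediv_add_emod (v j) (p j), mul_comm (v j / (p j : ℤ)) ((p j : ℤ))]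
    · simp only [if_neg h]
      linarith [Int.mul_ediv_add_emod (v j) (p j), mul_comm (v j / (p j : ℤ)) ((p j : ℤ))]
  rw [hv]
  exact mem_closure_sum p _ i0

/-- `P • x = deg x • canon`. -/
lemma Pbig_smul (x : StringGroup p) (i0 : ι) :
    (Pbig p : ℤ) • x = deg p x • canon p i0 := by
  induction x using QuotientAddGroup.induction_on with
  | H v =>
    have h1 : (Pbig p : ℤ) • (mkS p v) = mkS p ((Pbig p : ℤ) • v) := rfl
    have h2 : deg p (mkS p v) • canon p i0
        = mkS p ((degPre p v) • ((p i0 : ℤ) • Pi.single i0 1)) := by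
      simp only [deg_mk, map_zsmul]; rfl
    show (Pbig p : ℤ) • (mkS p v) = deg p (mkS p v) • canon p i0
    rw [h1, h2]
    apply mkS_eq_of_sub_mem
    have key := sum_relator_eq p (fun i => ((Pbig p / p i : ℕ) : ℤ) * v i) i0
    have hfun : (fun i => (((Pbig p / p i : ℕ) : ℤ) * v i) * (p i : ℤ)) = (Pbig p : ℤ) • v := by
      funext j
      have := Pdiv_mul p j
      simp only [Pi.smul_apply, smul_eq_mul]
      linear_combination v j * this
    have hsum : (∑ i, ((Pbig p / p i : ℕ) : ℤ) * v i) = degPre p v := rfl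
    have hv : (Pbig p : ℤ) • v - (degPre p v) • ((p i0 : ℤ) • Pi.single i0 1)
        = ∑ i, (((Pbig p / p i : ℕ) : ℤ) * v i) •
            ((p i : ℤ) • Pi.single i 1 - (p i0 : ℤ) • Pi.single i0 1) := by
      rw [key, hfun, hsum, smul_smul]
    rw [hv]
    exact mem_closure_sum p _ i0

end Aux

section Aux2
variable {ι : Type} [Fintype ι] [DecidableEq ι] (p : ι → ℕ)

def psiPre : (ι → ℤ) →+ (∀ j, ZMod (p j)) :=
  AddMonoidHom.mk' (fun v j => ((v j : ℤ) : ZMod (p j))) (by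
    intro a b
    funext j
    simp [Int.cast_add])

lemma psiPre_relator {v : ι → ℤ} (hv : v ∈ stringRelators p) : psiPre p v = 0 := by
  obtain ⟨i, j', rfl⟩ := hv
  funext j
  show ((((p i : ℤ) • Pi.single i 1 - (p j' : ℤ) • Pi.single j' 1 : ι → ℤ) j : ℤ) : ZMod (p j)) = 0
  have hc : ((p i : ℤ) • Pi.single i 1 - (p j' : ℤ) • Pi.single j' 1 : ι → ℤ) j
      = (if j = i then (p i : ℤ) else 0) - (if j = j' then (p j' : ℤ) else 0) := by
    simp [Pi.single_apply, mul_ite]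
  rw [hc]
  push_cast
  rcases eq_or_ne j i with rfl | h1
  · rcases eq_or_ne j j' with rfl | h2
    · simp
    · simp [h2, ZMod.natCast_self]
  · rcases eq_or_ne j j' with rfl | h2
    · simp [h1, ZMod.natCast_self]
    · simp [h1, h2]

def psi : StringGroup p →+ (∀ j, ZMod (p j)) :=
  QuotientAddGroup.lift _ (psiPre p) ((AddSubgroup.closure_le _).mpr fun v hv =>
    AddMonoidHom.mem_ker.mpr (psiPre_relator p hv))

lemma psi_mk (v : ι → ℤ) :
    psi p (QuotientAddGroup.mk v) = fun j => ((v j : ℤ) : ZMod (p j)) := rfl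

lemma eq_zero_of_deg_psi (hp0 : ∀ i, p i ≠ 0) (i0 : ι) (x : StringGroup p)
    (hdeg : deg p x = 0) (hpsi : psi p x = 0) : x = 0 := by
  induction x using QuotientAddGroup.induction_on with
  | H v =>
    rw [psi_mk] at hpsi
    have hdvd : ∀ j, ((p j : ℤ)) ∣ v j := by
      intro j
      have h := congrFun hpsi j
      simp only [Pi.zero_apply] at h
      exact (ZMod.intCast_zmod_eq_zero_iff_dvd _ _).mp h
    have hmod : ∀ j, v j % (p j : ℤ) = 0 := fun j => Int.emod_eq_zero_of_dvd (hdvd j)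
    have hterm : ∀ i, ((Pbig p / p i : ℕ) : ℤ) * v i = (Pbig p : ℤ) * (v i / (p i : ℤ)) := by
      intro i
      calc ((Pbig p / p i : ℕ) : ℤ) * v i
          = ((Pbig p / p i : ℕ) : ℤ) * (v i / (p i : ℤ) * (p i : ℤ)) := by
            rw [Int.ediv_mul_cancel (hdvd i)]
        _ = (((Pbig p / p i : ℕ) : ℤ) * (p i : ℤ)) * (v i / (p i : ℤ)) := by ring
        _ = (Pbig p : ℤ) * (v i / (p i : ℤ)) := by rw [Pdiv_mul]
    have h1 : degPre p v = (Pbig p : ℤ) * ∑ i, v i / (p i : ℤ) := by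
      simp only [degPre, AddMonoidHom.mk'_apply]
      rw [Finset.mul_sum]
      exact Finset.sum_congr rfl fun i _ => hterm i
    have hdeg' : degPre p v = 0 := hdeg
    have hP : (Pbig p : ℤ) ≠ 0 := by
      simp only [Pbig]
      exact_mod_cast Finset.prod_ne_zero_iff.mpr fun i _ => hp0 i
    have hdiv : (∑ i, v i / (p i : ℤ)) = 0 := by
      rcases mul_eq_zero.mp (h1 ▸ hdeg') with h | h
      · exact absurd h hP
      · exact h
    have hnf := mk_normal_form p v i0
    have hz : (∑ i, (v i % (p i : ℤ)) • xgen p i + (∑ i, v i / (p i : ℤ)) • canon p i0) = 0 := by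
      simp [hmod, hdiv]
    exact hnf.trans hz

end Aux2

def IsEffective {κ : Type} [DecidableEq κ] (q : κ → ℕ) (H : AddSubgroup (StringGroup q)) : Prop :=
  ∀ j : κ, ∀ ρ : StringGroup q →+ ZMod (q j),
    (∀ k, ρ (xgen q k) = if k = j then 1 else 0) →
    ∀ y : ZMod (q j), ∃ x ∈ H, ρ x = y

def Admissible {ι κ : Type} [DecidableEq ι] [DecidableEq κ]
    (p : ι → ℕ) (q : κ → ℕ)
    (multp : StringGroup p → ℕ) (multq : StringGroup q → ℕ)
    (π : StringGroup p →+ StringGroup q) : Prop :=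
  IsEffective q π.range ∧
  ∀ z ∈ Set.range π, (∑ᶠ x ∈ π ⁻¹' {z}, multp x) = multq z


theorem stmt6 {t s : ℕ} (p : Fin (t+1) → ℕ) (q : Fin (s+1) → ℕ)
    (hp : ∀ i, 2 ≤ p i) (hq : ∀ j, 2 ≤ q j)
    (multp : StringGroup p → ℕ) (multq : StringGroup q → ℕ)
    (hmultp : ∀ (l : Fin (t+1) → ℤ) (m : ℤ), (∀ i, 0 ≤ l i ∧ l i < (p i : ℤ)) →
      multp (∑ i, l i • xgen p i + m • canon p 0) = (m + 1).toNat)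
    (hmultq : ∀ (l : Fin (s+1) → ℤ) (m : ℤ), (∀ j, 0 ≤ l j ∧ l j < (q j : ℤ)) →
      multq (∑ j, l j • xgen q j + m • canon q 0) = (m + 1).toNat)
    (π : StringGroup p →+ StringGroup q)
    (hadm : Admissible p q multp multq π)
    :
    π.ker ≤ AddCommGroup.torsion (StringGroup p) ∧
    (π.ker : Set (StringGroup p)).Finite := by
  classical
  obtain ⟨heff, hsum⟩ := hadm
  have hp0 : ∀ i, p i ≠ 0 := fun i => by have := hp i; omega
  have hppos : ∀ i, (0:ℤ) < (p i : ℤ) := fun i => by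
    exact_mod_cast Nat.lt_of_lt_of_le Nat.zero_lt_two (hp i)
  have hPposn : 0 < Pbig p := Finset.prod_pos fun i _ => by have := hp i; omega
  have hPpos : (0:ℤ) < (Pbig p : ℤ) := by exact_mod_cast hPposn
  -- mult formula on representatives
  have hm : ∀ v : Fin (t+1) → ℤ,
      multp (mkS p v) = ((∑ i, v i / (p i : ℤ)) + 1).toNat := by
    intro v
    rw [mk_normal_form p v 0]
    exact hmultp _ _ fun i =>
      ⟨Int.emod_nonneg _ (hppos i).ne', Int.emod_lt_of_pos _ (hppos i)⟩
  -- multq 0 = 1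
  have hq0 : multq 0 = 1 := by
    have h := hmultq (fun _ => 0) 0 (fun j =>
      ⟨le_refl _, by
        show (0:ℤ) < (q j : ℤ)
        exact_mod_cast Nat.lt_of_lt_of_le Nat.zero_lt_two (hq j)⟩)
    simpa using h
  have hfs : (∑ᶠ x ∈ π ⁻¹' {0}, multp x) = 1 := by
    rw [hsum 0 ⟨0, map_zero π⟩, hq0]
  have hfin0 : (π ⁻¹' {0} ∩ Function.support multp).Finite := by
    by_contra h
    rw [finsum_mem_eq_zero_of_infinite h] at hfs
    exact zero_ne_one hfs
  -- degree vanishes on the kernel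
  have hdeg0 : ∀ x : StringGroup p, π x = 0 → deg p x = 0 := by
    intro x hx
    by_contra hd
    set d := deg p x with hdd
    obtain ⟨v, hv⟩ := QuotientAddGroup.mk'_surjective
      (AddSubgroup.closure (stringRelators p)) x
    have hv' : mkS p v = x := hv
    have hdegv : degPre p v = d := by rw [← deg_mk p, hv']
    set K : ℕ := (t+1) * Pbig p + 1 with hK
    have hdsq : (0:ℤ) < d * d := mul_self_pos.mpr hd
    have hmem : ∀ n : ℕ,
        (((K + n : ℕ) : ℤ) * d) • x ∈ π ⁻¹' {0} ∩ Function.support multp := by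
      intro n
      set c : ℤ := ((K + n : ℕ) : ℤ) * d with hc
      constructor
      · simp [Set.mem_preimage, map_zsmul, hx]
      · have hxw : c • x = mkS p (c • v) := by rw [← hv', map_zsmul]
        rw [Function.mem_support, hxw, hm]
        set w : Fin (t+1) → ℤ := c • v with hw
        have hwdeg : degPre p w = c * d := by
          rw [hw, map_zsmul, hdegv, smul_eq_mul]
        have hbound : ∀ i : Fin (t+1),
            ((Pbig p / p i : ℕ):ℤ) * w i - (Pbig p:ℤ) ≤ (Pbig p:ℤ) * (w i / (p i:ℤ)) := by
          intro i
          have h1 : (p i:ℤ) * (w i / (p i:ℤ)) + w i % (p i:ℤ) = w i := Int.mul_ediv_add_emod _ _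
          have h2 : w i % (p i:ℤ) < (p i:ℤ) := Int.emod_lt_of_pos _ (hppos i)
          have h4 : ((Pbig p / p i : ℕ):ℤ) * ((p i:ℤ) * (w i / (p i:ℤ)))
              = (Pbig p:ℤ) * (w i / (p i:ℤ)) := by rw [← mul_assoc, Pdiv_mul]
          have h5 : (0:ℤ) ≤ ((Pbig p / p i : ℕ):ℤ) := Int.natCast_nonneg _
          have h6 := Pdiv_mul p i
          have h7 : ((Pbig p / p i : ℕ):ℤ) * ((p i:ℤ) * (w i / (p i:ℤ)) + w i % (p i:ℤ))
              = ((Pbig p / p i : ℕ):ℤ) * w i := by rw [h1]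
          nlinarith [mul_le_mul_of_nonneg_left h2.le h5]
        have hsumb : degPre p w - ((t+1 : ℕ):ℤ) * (Pbig p:ℤ)
            ≤ (Pbig p:ℤ) * ∑ i, w i / (p i:ℤ) := by
          have hs := Finset.sum_le_sum fun i (_ : i ∈ Finset.univ) => hbound i
          rw [Finset.sum_sub_distrib, Finset.sum_const, ← Finset.mul_sum] at hs
          have hcard : (Finset.univ : Finset (Fin (t+1))).card = t+1 := by simp
          rw [hcard, nsmul_eq_mul] at hs
          have hdw : degPre p w = ∑ i, ((Pbig p / p i : ℕ):ℤ) * w i := rfl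
          rw [hdw]
          exact hs
        have hcd : ((K : ℕ):ℤ) ≤ c * d := by
          have h8 : ((K:ℕ):ℤ) ≤ ((K + n : ℕ):ℤ) := by exact_mod_cast Nat.le_add_right _ _
          have h9 : (0:ℤ) ≤ ((K:ℕ):ℤ) := Int.natCast_nonneg _
          have : c * d = ((K + n : ℕ):ℤ) * (d * d) := by rw [hc]; ring
          nlinarith
        have hKval : ((K:ℕ):ℤ) = ((t+1:ℕ):ℤ) * (Pbig p:ℤ) + 1 := by
          rw [hK]; push_cast; ring
        have hM : 0 ≤ ∑ i, w i / (p i:ℤ) := by nlinarith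
        rw [Ne, Int.toNat_eq_zero]
        omega
    have hinj : Function.Injective
        (fun n : ℕ => (((K + n : ℕ) : ℤ) * d) • x) := by
      intro n1 n2 h
      have h1 := congrArg (deg p) h
      simp only [map_zsmul, smul_eq_mul, ← hdd] at h1
      have h2 := mul_right_cancel₀ hd h1
      have h3 := mul_right_cancel₀ hd h2
      have h4 : (K + n1 : ℕ) = (K + n2 : ℕ) := by exact_mod_cast h3
      omega
    exact (Set.infinite_of_injective_forall_mem hinj hmem) hfin0
  constructor
  · intro x hx
    have h0 : deg p x = 0 := hdeg0 x (AddMonoidHom.mem_ker.mp hx)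
    have hz : (Pbig p : ℤ) • x = 0 := by rw [Pbig_smul p x 0, h0, zero_zsmul]
    show IsOfFinAddOrder x
    exact isOfFinAddOrder_iff_nsmul_eq_zero.mpr
      ⟨Pbig p, hPposn, by rw [← natCast_zsmul]; exact hz⟩
  · haveI : ∀ j, NeZero (p j) := fun j => ⟨hp0 j⟩
    have hinj : Function.Injective
        (fun x : (π.ker : Set (StringGroup p)) => psi p (x : StringGroup p)) := by
      intro a b hab
      have hab' : psi p (a : StringGroup p) = psi p (b : StringGroup p) := hab
      have ha : π (a : StringGroup p) = 0 := a.2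
      have hb : π (b : StringGroup p) = 0 := b.2
      have h1 : psi p ((a : StringGroup p) - b) = 0 := by
        rw [map_sub, hab', sub_self]
      have h2 : deg p ((a : StringGroup p) - b) = 0 := by
        rw [map_sub, hdeg0 _ ha, hdeg0 _ hb, sub_self]
      have h3 := eq_zero_of_deg_psi p hp0 0 _ h2 h1
      exact Subtype.ext (sub_eq_zero.mp h3)
    haveI : Finite (π.ker : Set (StringGroup p)) := Finite.of_injective _ hinj
    exact Set.toFinite _
end

section
/- Let π: L(p) → L(q) be an admissible homomorphism with kernel of order n ≥ 2. Then every nonzero element y of ker π, written in normal form y = Σ_{i=1}^t b_i x_i + b c with 0 ≤ b_i ≤ p_i − 1, satisfies b = −1 and exactly two of the coefficients b_i are nonzero. -/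
open scoped BigOperators

section Aux
variable {ι : Type} [DecidableEq ι]

lemma xgen_relator (p : ι → ℕ) (i j : ι) :
    (p i : ℤ) • xgen p i = (p j : ℤ) • xgen p j := by
  set N := AddSubgroup.closure (stringRelators p)
  have hmem : ((p i : ℤ) • Pi.single i (1:ℤ) - (p j : ℤ) • Pi.single j (1:ℤ)) ∈ N :=
    AddSubgroup.subset_closure ⟨i, j, rfl⟩
  have h2 : (QuotientAddGroup.mk' N) ((p i : ℤ) • Pi.single i (1:ℤ) - (p j : ℤ) • Pi.single j (1:ℤ)) = 0 := by
    rw [QuotientAddGroup.mk'_apply]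
    exact (QuotientAddGroup.eq_zero_iff _).mpr hmem
  rw [map_sub, map_zsmul, map_zsmul] at h2
  have h3 := sub_eq_zero.mp h2
  exact h3

lemma mk_eq_sum [Fintype ι] (p : ι → ℕ) (f : ι → ℤ) :
    (QuotientAddGroup.mk f : StringGroup p) = ∑ i, f i • xgen p i := by
  set N := AddSubgroup.closure (stringRelators p)
  have hf : f = ∑ i, f i • Pi.single i (1:ℤ) := by
    ext j
    rw [Finset.sum_apply]
    simp [Pi.single_apply]
  calc (QuotientAddGroup.mk f : StringGroup p)
      = (QuotientAddGroup.mk' N) f := rfl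
    _ = ∑ i, f i • xgen p i := by
        conv_lhs => rw [hf, map_sum]
        exact Finset.sum_congr rfl fun i _ => by rw [map_zsmul]; rfl

lemma exists_nf [Fintype ι] (p : ι → ℕ) (hp : ∀ i, 0 < p i) (i0 : ι) (v : StringGroup p) :
    ∃ (l : ι → ℤ) (m : ℤ), (∀ i, 0 ≤ l i ∧ l i < (p i : ℤ)) ∧
      v = ∑ i, l i • xgen p i + m • canon p i0 := by
  obtain ⟨f, rfl⟩ := QuotientAddGroup.mk_surjective v
  refine ⟨fun i => f i % (p i : ℤ), ∑ i, f i / (p i : ℤ), ?_, ?_⟩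
  · intro i
    have h0 : (0:ℤ) < (p i : ℤ) := by exact_mod_cast hp i
    exact ⟨Int.emod_nonneg _ h0.ne', Int.emod_lt_of_pos _ h0⟩
  · rw [mk_eq_sum]
    have key : ∀ i : ι, f i • xgen p i
        = (f i % (p i : ℤ)) • xgen p i + (f i / (p i : ℤ)) • canon p i0 := by
      intro i
      rw [show canon p i0 = (p i : ℤ) • xgen p i from (xgen_relator p i i0).symm]
      rw [smul_smul, ← add_zsmul]
      congr 1
      rw [mul_comm]
      exact (Int.emod_add_mul_ediv _ _).symm
    rw [Finset.sum_congr rfl (fun i _ => key i), Finset.sum_add_distrib, ← Finset.sum_smul]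

end Aux

theorem stmt8 {t s : ℕ} (p : Fin (t+1) → ℕ) (q : Fin (s+1) → ℕ)
    (hp : ∀ i, 2 ≤ p i) (hq : ∀ j, 2 ≤ q j)
    (multp : StringGroup p → ℕ) (multq : StringGroup q → ℕ)
    (hmultp : ∀ (l : Fin (t+1) → ℤ) (m : ℤ), (∀ i, 0 ≤ l i ∧ l i < (p i : ℤ)) →
      multp (∑ i, l i • xgen p i + m • canon p 0) = (m + 1).toNat)
    (hmultq : ∀ (l : Fin (s+1) → ℤ) (m : ℤ), (∀ j, 0 ≤ l j ∧ l j < (q j : ℤ)) →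
      multq (∑ j, l j • xgen q j + m • canon q 0) = (m + 1).toNat)
    (π : StringGroup p →+ StringGroup q)
    (hadm : Admissible p q multp multq π)
    (hn : 2 ≤ Nat.card π.ker) :
    ∀ y ∈ π.ker, y ≠ 0 → ∀ (b : Fin (t+1) → ℤ) (m : ℤ),
      (∀ i, 0 ≤ b i ∧ b i < (p i : ℤ)) →
      y = ∑ i, b i • xgen p i + m • canon p 0 →
      m = -1 ∧ (Finset.univ.filter fun i => b i ≠ 0).card = 2 := by
  classical
  obtain ⟨-, hsum⟩ := hadm
  -- positivity of p, q
  have hpl : ∀ i, 0 < p i := fun i => lt_of_lt_of_le two_pos (hp i)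
  have hql : ∀ j, 0 < q j := fun j => lt_of_lt_of_le two_pos (hq j)
  -- finiteness of the kernel
  have hfin : Finite ↥π.ker := (Nat.card_ne_zero.mp (by omega)).2
  have hKfin : ((π.ker : Set (StringGroup p))).Finite := by
    rw [← Set.finite_coe_iff]; exact hfin
  set KF : Finset (StringGroup p) := hKfin.toFinset with hKF
  have hmemKF : ∀ w : StringGroup p, w ∈ KF ↔ π w = 0 := by
    intro w
    rw [hKF, Set.Finite.mem_toFinset, SetLike.mem_coe, AddMonoidHom.mem_ker]
  have h0K : (0 : StringGroup p) ∈ KF := (hmemKF 0).mpr (map_zero π)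
  -- master fiber identity
  have master : ∀ u : StringGroup p, ∑ w ∈ KF, multp (u + w) = multq (π u) := by
    intro u
    have h1 := hsum (π u) ⟨u, rfl⟩
    have h2 : (π ⁻¹' {π u} : Set (StringGroup p))
        = (fun w => u + w) '' (π.ker : Set (StringGroup p)) := by
      ext x
      constructor
      · intro hx
        have hx' : π x = π u := hx
        exact ⟨x - u, by simp [SetLike.mem_coe, AddMonoidHom.mem_ker, map_sub, hx'], by abel_nf⟩
      · rintro ⟨w, hw, rfl⟩
        have hw' : π w = 0 := hw
        simp [Set.mem_preimage, map_add, hw']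
    rw [h2, finsum_mem_image ((add_right_injective u).injOn)] at h1
    rw [← h1, ← Set.Finite.coe_toFinset hKfin, finsum_mem_coe_finset]
  -- normal forms on the p side, chosen globally
  obtain ⟨B, Mm, hB⟩ : ∃ (B : StringGroup p → Fin (t+1) → ℤ) (Mm : StringGroup p → ℤ),
      ∀ v, (∀ i, 0 ≤ B v i ∧ B v i < (p i : ℤ)) ∧
        v = ∑ i, B v i • xgen p i + Mm v • canon p 0 := by
    choose B Mm h using exists_nf p hpl 0
    exact ⟨B, Mm, h⟩
  have hmulr : ∀ (w : StringGroup p) (r : ℤ),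
      multp (r • canon p 0 + w) = (Mm w + r + 1).toNat := by
    intro w r
    have hrw : r • canon p 0 + w = ∑ i, B w i • xgen p i + (Mm w + r) • canon p 0 := by
      conv_lhs => rw [(hB w).2]
      rw [add_zsmul]
      abel
    rw [hrw, hmultp _ _ (hB w).1]
  have hmulv : ∀ w : StringGroup p, multp w = (Mm w + 1).toNat := by
    intro w
    conv_lhs => rw [(hB w).2]
    rw [hmultp _ _ (hB w).1]
  -- multp 0 = 1, multq 0 = 1
  have hp0 : multp 0 = 1 := by
    have := hmultp (fun _ => 0) 0 (fun i => ⟨le_refl _, by simpa using (Int.natCast_pos.mpr (hpl i))⟩)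
    simpa using this
  have hq0 : multq 0 = 1 := by
    have := hmultq (fun _ => 0) 0 (fun j => ⟨le_refl _, by simpa using (Int.natCast_pos.mpr (hql j))⟩)
    simpa using this
  -- every nonzero kernel element has multp = 0
  have hsum0 : ∑ w ∈ KF, multp w = 1 := by
    have := master 0
    simp only [zero_add, map_zero] at this
    rw [this, hq0]
  have hker0 : ∀ w ∈ KF, w ≠ 0 → multp w = 0 := by
    intro w hw hw0
    by_contra hcon
    have hpair : ({0, w} : Finset (StringGroup p)) ⊆ KF := by
      intro x hx
      rcases Finset.mem_insert.mp hx with rfl | hx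
      · exact h0K
      · rw [Finset.mem_singleton.mp hx]; exact hw
    have h2 : multp 0 + multp w ≤ ∑ x ∈ KF, multp x := by
      rw [← Finset.sum_pair (Ne.symm hw0)]
      exact Finset.sum_le_sum_of_subset hpair
    omega
  have hm_le : ∀ w ∈ KF, w ≠ 0 → Mm w ≤ -1 := by
    intro w hw hw0
    have := hker0 w hw hw0
    rw [hmulv w] at this
    omega
  -- the image of the canonical class
  set d := π (canon p 0) with hd
  obtain ⟨e, μ, heb, herep⟩ := exists_nf q hql 0 d
  have canonq : ∀ j, (q j : ℤ) • xgen q j = canon q 0 := fun j => xgen_relator q j 0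
  -- g formula
  have hg : ∀ r : ℤ, ∑ w ∈ KF, (Mm w + r + 1).toNat = multq (r • d) := by
    intro r
    have hmm := master (r • canon p 0)
    rw [map_zsmul] at hmm
    rw [← hmm]
    exact Finset.sum_congr rfl fun w _ => (hmulr w r).symm
  set N : ℤ := (KF.card : ℤ) with hN
  set Q : ℤ := ∏ j, (q j : ℤ) with hQdef
  have hQ0 : 0 < Q := by
    rw [hQdef]
    refine Finset.prod_pos (fun j _ => ?_)
    exact_mod_cast hql j
  have hQ1 : 1 ≤ Q := hQ0
  set T : ℤ := 1 + ((∑ w ∈ KF, (Mm w).natAbs : ℕ) : ℤ) with hT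
  have hT1 : 1 ≤ T := by omega
  set r : ℤ := Q * T with hr
  have hrT : T ≤ r := le_mul_of_one_le_left (by omega) hQ1
  have hrbig : ∀ w ∈ KF, 1 ≤ Mm w + r := by
    intro w hw
    have h1 : (Mm w).natAbs ≤ ∑ w ∈ KF, (Mm w).natAbs :=
      Finset.single_le_sum (f := fun w => (Mm w).natAbs) (fun _ _ => Nat.zero_le _) hw
    omega
  have hdvd : ∀ j, (q j : ℤ) ∣ r :=
    fun j => Dvd.dvd.mul_right (Finset.dvd_prod_of_mem (fun j => ((q j : ℕ) : ℤ)) (Finset.mem_univ j)) T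
  set S : ℤ := ∑ j, (r * e j) / (q j : ℤ) with hS
  have hrd : r • d = ∑ j, (0:ℤ) • xgen q j + (r * μ + S) • canon q 0 := by
    conv_lhs => rw [herep]
    rw [zsmul_add, smul_smul]
    rw [show r • ∑ j, e j • xgen q j = ∑ j, r • (e j • xgen q j) from map_sum (zsmulAddGroupHom r) _ _]
    have hterm : ∀ j : Fin (s+1), r • (e j • xgen q j) = ((r * e j) / (q j:ℤ)) • canon q 0 := by
      intro j
      have hdd : (q j : ℤ) ∣ r * e j := Dvd.dvd.mul_right (hdvd j) _
      have hcan : r * e j = ((r * e j) / (q j:ℤ)) * (q j : ℤ) := (Int.ediv_mul_cancel hdd).symm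
      rw [smul_smul]
      conv_lhs => rw [hcan, mul_smul, canonq j]
    rw [show (∑ j, r • (e j • xgen q j)) = ∑ j, ((r * e j) / (q j:ℤ)) • canon q 0 from
      Finset.sum_congr rfl fun j _ => hterm j]
    rw [← Finset.sum_smul]
    rw [← add_zsmul, add_comm S (r * μ)]
    simp
  have hA1 : multq (r • d) = (r * μ + S + 1).toNat := by
    rw [hrd]
    exact hmultq _ _ (fun j => ⟨le_refl _, by simpa using (Int.natCast_pos.mpr (hql j))⟩)
  have hr1d : (r+1) • d = ∑ j, e j • xgen q j + ((r+1) * μ + S) • canon q 0 := by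
    have h1 : (r+1) • d = d + r • d := by rw [add_zsmul, one_zsmul]; exact add_comm _ _
    rw [h1, hrd]
    conv_lhs => rw [herep]
    have hco : ((r+1) * μ + S) = μ + (r * μ + S) := by ring
    rw [hco]
    conv_rhs => rw [add_zsmul, add_zsmul]
    conv_lhs => rw [add_zsmul]
    simp only [zero_zsmul, Finset.sum_const_zero, zero_add]
    exact add_assoc _ _ _
  have hA2 : multq ((r+1) • d) = ((r+1) * μ + S + 1).toNat := by
    rw [hr1d]
    exact hmultq _ _ heb
  have hzsum : ∀ ρ : ℤ, (∀ w ∈ KF, 1 ≤ Mm w + ρ) →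
      ((∑ w ∈ KF, (Mm w + ρ + 1).toNat : ℕ) : ℤ) = (∑ w ∈ KF, Mm w) + N * (ρ + 1) := by
    intro ρ hρ
    rw [Nat.cast_sum]
    rw [Finset.sum_congr rfl fun w hw => Int.toNat_of_nonneg (by have := hρ w hw; omega)]
    rw [Finset.sum_add_distrib, Finset.sum_add_distrib, Finset.sum_const, Finset.sum_const]
    simp only [nsmul_eq_mul, hN]
    ring
  have hMMr := hzsum r hrbig
  have hrbig1 : ∀ w ∈ KF, 1 ≤ Mm w + (r+1) := fun w hw => by have := hrbig w hw; omega
  have hMMr1 := hzsum (r+1) hrbig1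
  have hg_r := hg r
  have hg_r1 := hg (r+1)
  rw [hA1] at hg_r
  rw [hA2] at hg_r1
  have hpos_r : 1 ≤ ∑ w ∈ KF, (Mm w + r + 1).toNat := by
    have h0 : 1 ≤ (Mm (0:StringGroup p) + r + 1).toNat := by have := hrbig 0 h0K; omega
    exact le_trans h0 (Finset.single_le_sum (f := fun w => (Mm w + r + 1).toNat) (fun _ _ => Nat.zero_le _) h0K)
  have hpos_r1 : 1 ≤ ∑ w ∈ KF, (Mm w + (r+1) + 1).toNat := by
    have h0 : 1 ≤ (Mm (0:StringGroup p) + (r+1) + 1).toNat := by have := hrbig1 0 h0K; omega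
    exact le_trans h0 (Finset.single_le_sum (f := fun w => (Mm w + (r+1) + 1).toNat) (fun _ _ => Nat.zero_le _) h0K)
  have e1 : r * μ + S + 1 = (∑ w ∈ KF, Mm w) + N * (r + 1) := by
    set X := r * μ + S + 1 with hX
    set Y := (∑ w ∈ KF, Mm w) + N * (r + 1) with hY
    omega
  have e2 : (r+1) * μ + S + 1 = (∑ w ∈ KF, Mm w) + N * ((r+1) + 1) := by
    set X := (r+1) * μ + S + 1 with hX
    set Y := (∑ w ∈ KF, Mm w) + N * ((r+1) + 1) with hY
    omega
  have hμ : μ = N := by linear_combination e2 - e1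
  -- r = 1 analysis
  have hgd : multq ((1:ℤ) • d) = (N + 1).toNat := by
    rw [one_zsmul]
    conv_lhs => rw [herep]
    rw [hmultq _ _ heb, hμ]
  have hg1 := hg 1
  rw [hgd] at hg1
  have hNval : (N + 1).toNat = KF.card + 1 := by rw [hN]; omega
  rw [hNval] at hg1
  have hMm0 : Mm (0 : StringGroup p) = 0 := by
    have hv := hmulv 0
    rw [hp0] at hv
    omega
  have hsplit : (Mm (0:StringGroup p) + 1 + 1).toNat
      + ∑ w ∈ KF.erase 0, (Mm w + 1 + 1).toNat = KF.card + 1 := by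
    rw [← hg1]
    exact Finset.add_sum_erase KF (fun w => (Mm w + 1 + 1).toNat) h0K
  have hcard : (KF.erase 0).card = KF.card - 1 := Finset.card_erase_of_mem h0K
  have hterm_le : ∀ w ∈ KF.erase 0, (Mm w + 1 + 1).toNat ≤ 1 := by
    intro w hw
    obtain ⟨hw0, hwK⟩ := Finset.mem_erase.mp hw
    have := hm_le w hwK hw0
    omega
  have hall1 : ∀ w ∈ KF.erase 0, (Mm w + 1 + 1).toNat = 1 := by
    have hc1 : 1 ≤ KF.card := Finset.card_pos.mpr ⟨0, h0K⟩
    have hsum_e : ∑ w ∈ KF.erase 0, (Mm w + 1 + 1).toNat = ∑ _w ∈ KF.erase 0, 1 := by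
      rw [← Finset.card_eq_sum_ones, hcard]
      rw [hMm0] at hsplit
      omega
    exact fun w hw => (Finset.sum_eq_sum_iff_of_le hterm_le).mp hsum_e w hw
  have hkey : ∀ w ∈ KF, w ≠ 0 → multp ((1:ℤ) • canon p 0 + w) = 1 := by
    intro w hw hw0
    rw [hmulr w 1]
    exact hall1 w (Finset.mem_erase.mpr ⟨hw0, hw⟩)
  -- now the final statement
  intro y hyker hy0 b m hb hyrep
  have hyKF : y ∈ KF := (hmemKF y).mpr (AddMonoidHom.mem_ker.mp hyker)
  have h8 : (m + 1 + 1).toNat = 1 := by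
    have hk := hkey y hyKF hy0
    have hcy : (1:ℤ) • canon p 0 + y = ∑ i, b i • xgen p i + (m + 1) • canon p 0 := by
      conv_lhs => rw [hyrep]
      rw [add_zsmul]
      abel
    rw [hcy, hmultp b (m+1) hb] at hk
    exact hk
  have hm1 : m = -1 := by omega
  refine ⟨hm1, ?_⟩
  set k : ℕ := (Finset.univ.filter fun i => b i ≠ 0).card with hkdef
  set b' : Fin (t+1) → ℤ := fun i => if b i = 0 then 0 else (p i : ℤ) - b i with hb'def
  have hb' : ∀ i, 0 ≤ b' i ∧ b' i < (p i : ℤ) := by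
    intro i
    have hpi : (2:ℤ) ≤ (p i : ℤ) := by exact_mod_cast hp i
    have hbi := hb i
    by_cases h : b i = 0
    · refine ⟨?_, ?_⟩ <;> simp only [hb'def, if_pos h] <;> omega
    · refine ⟨?_, ?_⟩ <;> simp only [hb'def, if_neg h] <;> omega
  have hXX : (∑ i, b i • xgen p i) + (∑ i, b' i • xgen p i) = (k:ℤ) • canon p 0 := by
    rw [← Finset.sum_add_distrib]
    have hterm : ∀ i : Fin (t+1), b i • xgen p i + b' i • xgen p i
        = (if b i = 0 then (0:StringGroup p) else canon p 0) := by
      intro i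
      by_cases h : b i = 0
      · simp [hb'def, h]
      · simp only [hb'def, if_neg h]
        rw [← add_zsmul]
        have hbi : b i + ((p i:ℤ) - b i) = (p i : ℤ) := by ring
        rw [hbi, xgen_relator p i 0]
        rfl
    rw [Finset.sum_congr rfl fun i _ => hterm i]
    rw [Finset.sum_ite, Finset.sum_const_zero, zero_add, Finset.sum_const]
    rw [natCast_zsmul]
  have hrep' : -y = ∑ i, b' i • xgen p i + (-(k:ℤ) - m) • canon p 0 := by
    have hc : (-(k:ℤ) - m) • canon p 0
        = -((∑ i, b i • xgen p i) + (∑ i, b' i • xgen p i)) + (-m) • canon p 0 := by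
      rw [hXX]
      have hco : (-(k:ℤ) - m) = (-(k:ℤ)) + (-m) := by ring
      rw [hco, add_zsmul, neg_zsmul]
    have h0 : y + (∑ i, b' i • xgen p i + (-(k:ℤ) - m) • canon p 0) = 0 := by
      conv_lhs => rw [hyrep]
      rw [hc, neg_zsmul]
      abel
    exact neg_eq_of_add_eq_zero_right h0
  have hy0' : (-y) ≠ 0 := neg_ne_zero.mpr hy0
  have hyKF' : -y ∈ KF := (hmemKF _).mpr (by rw [map_neg, AddMonoidHom.mem_ker.mp hyker, neg_zero])
  have h9 : ((-(k:ℤ) - m) + 1 + 1).toNat = 1 := by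
    have hk2 := hkey (-y) hyKF' hy0'
    have hcy' : (1:ℤ) • canon p 0 + (-y)
        = ∑ i, b' i • xgen p i + ((-(k:ℤ) - m) + 1) • canon p 0 := by
      conv_lhs => rw [hrep']
      rw [add_zsmul]
      abel
    rw [hcy', hmultp b' _ hb'] at hk2
    exact hk2
  omega
end

section
/- If π: L(p) → L(q) is an admissible homomorphism with ker π = 0, then (after a permutation of the weights) p = q and π sends each generator x_i of L(p) to the corresponding generator z_{σ(i)} of L(q) for some bijection σ; in particular s = t. -/
open scoped BigOperators

section Aux

set_option linter.unusedSectionVars false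

variable {ι : Type} [Fintype ι] [DecidableEq ι] (p : ι → ℕ)

/-- height of a representative vector -/
def ht (v : ι → ℤ) : ℤ := ∑ i, v i / (p i : ℤ)

lemma sum_single_eq (w : ι → ℤ) : ∑ i, w i • Pi.single i (1:ℤ) = w := by
  funext k
  simp [Finset.sum_apply, Pi.single_apply]

lemma mk_smul (n : ℤ) (v : ι → ℤ) :
    (QuotientAddGroup.mk (n • v) : StringGroup p) = n • QuotientAddGroup.mk v :=
  map_zsmul (QuotientAddGroup.mk' (AddSubgroup.closure (stringRelators p))) n v

lemma mk_single (i : ι) (a : ℤ) :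
    (QuotientAddGroup.mk (Pi.single i a) : StringGroup p) = a • xgen p i := by
  have h : Pi.single i a = a • (Pi.single i (1:ℤ) : ι → ℤ) := by
    funext k; simp [Pi.single_apply, mul_ite]
  rw [h, mk_smul]; rfl

lemma sum_smul_xgen (u : ι → ℤ) :
    ∑ i, u i • xgen p i = (QuotientAddGroup.mk u : StringGroup p) := by
  conv_rhs => rw [← sum_single_eq u]
  rw [show (QuotientAddGroup.mk (∑ i, u i • Pi.single i (1:ℤ)) : StringGroup p)
      = (QuotientAddGroup.mk' (AddSubgroup.closure (stringRelators p))) (∑ i, u i • Pi.single i (1:ℤ)) from rfl,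
    map_sum]
  refine Finset.sum_congr rfl fun i _ => ?_
  rw [map_zsmul]; rfl

lemma mk_eq_mk (i0 : ι) {v w : ι → ℤ} (c : ι → ℤ)
    (hc : ∀ i, w i - v i = (p i : ℤ) * c i) (hsum : ∑ i, c i = 0) :
    (QuotientAddGroup.mk v : StringGroup p) = QuotientAddGroup.mk w := by
  rw [QuotientAddGroup.eq]
  have hvw : -v + w = ∑ i, c i • ((p i : ℤ) • Pi.single i 1 - (p i0 : ℤ) • Pi.single i0 1) := by
    funext k
    have : ∑ i, c i * ((p i : ℤ) * (Pi.single i (1:ℤ) : ι → ℤ) k - (p i0 : ℤ) * (Pi.single i0 (1:ℤ) : ι → ℤ) k)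
        = (∑ i, c i * ((p i : ℤ) * (Pi.single i (1:ℤ) : ι → ℤ) k))
          - (∑ i, c i) * ((p i0 : ℤ) * (Pi.single i0 (1:ℤ) : ι → ℤ) k) := by
      simp only [mul_sub]
      rw [Finset.sum_sub_distrib, Finset.sum_mul]
    simp only [Finset.sum_apply, Pi.smul_apply, Pi.sub_apply, smul_eq_mul, Pi.neg_apply,
      Pi.add_apply]
    rw [this, hsum]
    have h2 : ∑ i, c i * ((p i : ℤ) * (Pi.single i (1:ℤ) : ι → ℤ) k) = c k * (p k : ℤ) := by
      rw [Finset.sum_eq_single k]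
      · simp
      · intro b _ hb; simp [Pi.single_apply, Ne.symm hb]
      · intro h; exact absurd (Finset.mem_univ k) h
    rw [h2]
    have := hc k
    linarith
  rw [hvw]
  refine AddSubgroup.sum_mem _ fun i _ => AddSubgroup.zsmul_mem _ ?_ _
  exact AddSubgroup.subset_closure ⟨i, i0, rfl⟩

lemma ht_single (i : ι) (a : ℤ) : ht p (Pi.single i a) = a / (p i : ℤ) := by
  unfold ht
  rw [Finset.sum_eq_single i]
  · simp
  · intro b _ hb; simp [Pi.single_apply, Ne.symm hb]
  · intro h; exact absurd (Finset.mem_univ i) h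

lemma decomp (i0 : ι) (v : ι → ℤ) :
    (QuotientAddGroup.mk v : StringGroup p)
      = ∑ i, (v i % (p i : ℤ)) • xgen p i + (ht p v) • canon p i0 := by
  have hcanon : (ht p v) • canon p i0
      = QuotientAddGroup.mk (Pi.single i0 (ht p v * (p i0 : ℤ))) := by
    rw [mk_single]
    rw [canon, smul_smul]
  rw [sum_smul_xgen, hcanon, show
    (QuotientAddGroup.mk (fun i => v i % (p i : ℤ)) : StringGroup p)
      + QuotientAddGroup.mk (Pi.single i0 (ht p v * (p i0 : ℤ)))
      = QuotientAddGroup.mk ((fun i => v i % (p i : ℤ)) + Pi.single i0 (ht p v * (p i0 : ℤ)))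
    from rfl]
  refine mk_eq_mk p i0 (fun i => -(v i / (p i : ℤ)) + (if i = i0 then ht p v else 0)) ?_ ?_
  · intro i
    have hmd : v i % (p i : ℤ) = v i - (p i : ℤ) * (v i / (p i : ℤ)) := by
      rw [Int.emod_def]
    simp only [Pi.add_apply, Pi.single_apply]
    split_ifs with h
    · subst h; rw [hmd]; ring
    · rw [hmd]; ring
  · rw [Finset.sum_add_distrib]
    simp [ht]

lemma rel_le_ker (j : ι) :
    AddSubgroup.closure (stringRelators p) ≤
      ((Int.castAddHom (ZMod (p j))).comp (Pi.evalAddMonoidHom (fun _ => ℤ) j)).ker := by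
  refine (AddSubgroup.closure_le _).2 ?_
  rintro v ⟨k, k', rfl⟩
  simp only [SetLike.mem_coe, AddMonoidHom.mem_ker, AddMonoidHom.comp_apply,
    Pi.evalAddMonoidHom_apply, Int.coe_castAddHom, Pi.sub_apply, Pi.smul_apply,
    Pi.single_apply, smul_eq_mul]
  push_cast
  split_ifs with h1 h2 h2 <;> subst_vars <;> simp

noncomputable def rho (j : ι) : StringGroup p →+ ZMod (p j) :=
  QuotientAddGroup.lift _
    ((Int.castAddHom (ZMod (p j))).comp (Pi.evalAddMonoidHom (fun _ => ℤ) j))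
    (fun _ hv => rel_le_ker p j hv)

lemma rho_mk (j : ι) (v : ι → ℤ) :
    rho p j (QuotientAddGroup.mk v) = ((v j : ℤ) : ZMod (p j)) := rfl

lemma rho_xgen (j k : ι) :
    rho p j (xgen p k) = if k = j then 1 else 0 := by
  rw [show xgen p k = QuotientAddGroup.mk (Pi.single k 1) from rfl, rho_mk, Pi.single_apply]
  by_cases h : k = j
  · subst h; simp
  · simp [h, Ne.symm h]

end Aux

theorem stmt9 {t s : ℕ} (p : Fin (t+1) → ℕ) (q : Fin (s+1) → ℕ)
    (hp : ∀ i, 2 ≤ p i) (hq : ∀ j, 2 ≤ q j)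
    (multp : StringGroup p → ℕ) (multq : StringGroup q → ℕ)
    (hmultp : ∀ (l : Fin (t+1) → ℤ) (m : ℤ), (∀ i, 0 ≤ l i ∧ l i < (p i : ℤ)) →
      multp (∑ i, l i • xgen p i + m • canon p 0) = (m + 1).toNat)
    (hmultq : ∀ (l : Fin (s+1) → ℤ) (m : ℤ), (∀ j, 0 ≤ l j ∧ l j < (q j : ℤ)) →
      multq (∑ j, l j • xgen q j + m • canon q 0) = (m + 1).toNat)
    (π : StringGroup p →+ StringGroup q)
    (hadm : Admissible p q multp multq π)
    (hker : π.ker = ⊥) :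
    ∃ σ : Fin (t+1) ≃ Fin (s+1),
      (∀ i, q (σ i) = p i) ∧ ∀ i, π (xgen p i) = xgen q (σ i) := by
  have hp1 : ∀ i, (0:ℤ) < (p i : ℤ) := fun i => by
    have h0 : 0 < p i := lt_of_lt_of_le (by norm_num) (hp i); exact_mod_cast h0
  have hq1 : ∀ j, (0:ℤ) < (q j : ℤ) := fun j => by
    have h0 : 0 < q j := lt_of_lt_of_le (by norm_num) (hq j); exact_mod_cast h0
  have hp2 : ∀ i, (2:ℤ) ≤ (p i : ℤ) := fun i => by exact_mod_cast hp i
  have hq2 : ∀ j, (2:ℤ) ≤ (q j : ℤ) := fun j => by exact_mod_cast hq j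
  -- mult formulas on representatives
  have multp_mk : ∀ v : Fin (t+1) → ℤ,
      multp (QuotientAddGroup.mk v) = (ht p v + 1).toNat := by
    intro v
    rw [decomp p 0 v]
    exact hmultp _ _ (fun i =>
      ⟨Int.emod_nonneg _ (ne_of_gt (hp1 i)), Int.emod_lt_of_pos _ (hp1 i)⟩)
  have multq_mk : ∀ w : Fin (s+1) → ℤ,
      multq (QuotientAddGroup.mk w) = (ht q w + 1).toNat := by
    intro w
    rw [decomp q 0 w]
    exact hmultq _ _ (fun j =>
      ⟨Int.emod_nonneg _ (ne_of_gt (hq1 j)), Int.emod_lt_of_pos _ (hq1 j)⟩)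
  -- injectivity
  have hinj : Function.Injective π := by
    rwa [← AddMonoidHom.ker_eq_bot_iff]
  -- multiplicity preservation
  have hpres : ∀ g, multq (π g) = multp g := by
    intro g
    have h2 := hadm.2 (π g) ⟨g, rfl⟩
    have hpre : π ⁻¹' {π g} = {g} := by
      ext x; simp [hinj.eq_iff]
    rw [hpre, finsum_mem_singleton] at h2
    exact h2.symm
  have key0 : ∀ (v : Fin (t+1) → ℤ) (w : Fin (s+1) → ℤ),
      π (QuotientAddGroup.mk v) = QuotientAddGroup.mk w → 0 ≤ ht p v →
      ht q w = ht p v := by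
    intro v w h hv
    have h2 := hpres (QuotientAddGroup.mk v)
    rw [h, multp_mk, multq_mk] at h2
    omega
  -- main analysis of π (xgen p i)
  have main : ∀ i, ∃ (j : Fin (s+1)) (a : ℤ), 0 < a ∧ (p i : ℤ) * a = (q j : ℤ) ∧
      π (xgen p i) = QuotientAddGroup.mk (Pi.single j a) := by
    intro i
    obtain ⟨v, hv⟩ := QuotientAddGroup.mk_surjective (π (xgen p i))
    have hhtx : ht p (Pi.single i (1:ℤ)) = 0 := by
      rw [ht_single]
      exact Int.ediv_eq_zero_of_lt (by norm_num) (by linarith [hp2 i])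
    have hv0 : ht q v = 0 := by
      have := key0 (Pi.single i 1) v (by rw [show (QuotientAddGroup.mk (Pi.single i (1:ℤ)) : StringGroup p) = xgen p i from rfl, hv]) (by rw [hhtx])
      rw [hhtx] at this; exact this
    set u : Fin (s+1) → ℤ := fun j => v j % (q j : ℤ) with hu
    have hub : ∀ j, 0 ≤ u j ∧ u j < (q j : ℤ) := fun j =>
      ⟨Int.emod_nonneg _ (ne_of_gt (hq1 j)), Int.emod_lt_of_pos _ (hq1 j)⟩
    have hπu : π (xgen p i) = QuotientAddGroup.mk u := by
      rw [← hv, decomp q 0 v, hv0, zero_zsmul, add_zero, sum_smul_xgen]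
    -- constraint
    have C : ∀ n : ℤ, 0 ≤ n → ∑ j, (n * u j) / (q j : ℤ) = n / (p i : ℤ) := by
      intro n hn
      have h1 : π (QuotientAddGroup.mk (n • Pi.single i (1:ℤ)))
          = QuotientAddGroup.mk (n • u) := by
        rw [mk_smul, mk_smul, map_zsmul,
          show (QuotientAddGroup.mk (Pi.single i (1:ℤ)) : StringGroup p) = xgen p i from rfl,
          hπu]
      have h2 : ht p (n • Pi.single i (1:ℤ)) = n / (p i : ℤ) := by
        have hns : (n • Pi.single i (1:ℤ) : Fin (t+1) → ℤ) = Pi.single i n := by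
          funext k; simp [Pi.single_apply, mul_ite]
        rw [hns, ht_single]
      have h3 := key0 _ _ h1 (h2 ▸ Int.ediv_nonneg hn (le_of_lt (hp1 i)))
      rw [h2] at h3
      rw [← h3]
      unfold ht
      refine Finset.sum_congr rfl fun j _ => ?_
      simp [smul_eq_mul]
    -- the big product
    set Q : ℤ := ∏ j, (q j : ℤ) with hQ
    have hQpos : 0 < Q := Finset.prod_pos (fun j _ => hq1 j)
    have hdvd : ∀ j, (q j : ℤ) ∣ Q := fun j => Finset.dvd_prod_of_mem _ (Finset.mem_univ j)
    set d : Fin (s+1) → ℤ := fun j => Q / (q j : ℤ) with hdd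
    have hd : ∀ j, (q j : ℤ) * d j = Q := fun j => Int.mul_ediv_cancel' (hdvd j)
    have hdpos : ∀ j, 0 < d j := by
      intro j
      nlinarith [hd j, hq1 j]
    have E : ∑ j, (p i : ℤ) * d j * u j = Q := by
      have hC := C ((p i : ℤ) * Q) (by positivity)
      have hterm : ∀ j, ((p i : ℤ) * Q * u j) / (q j : ℤ) = (p i : ℤ) * d j * u j := by
        intro j
        rw [show (p i : ℤ) * Q * u j = (q j : ℤ) * ((p i : ℤ) * d j * u j) by
          rw [← hd j]; ring]
        exact Int.mul_ediv_cancel_left _ (ne_of_gt (hq1 j))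
      calc ∑ j, (p i : ℤ) * d j * u j = ∑ j, ((p i : ℤ) * Q * u j) / (q j : ℤ) :=
            Finset.sum_congr rfl fun j _ => (hterm j).symm
        _ = ((p i : ℤ) * Q) / (p i : ℤ) := hC
        _ = Q := Int.mul_ediv_cancel_left _ (ne_of_gt (hp1 i))
    have htermnn : ∀ j, 0 ≤ (p i : ℤ) * d j * u j := fun j =>
      mul_nonneg (mul_nonneg (le_of_lt (hp1 i)) (le_of_lt (hdpos j))) (hub j).1
    have hexists : ∃ j, u j ≠ 0 := by
      by_contra h
      push_neg at h
      rw [Finset.sum_eq_zero (fun j _ => by rw [h j, mul_zero])] at E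
      omega
    have huniq : ∀ j1 j2, u j1 ≠ 0 → u j2 ≠ 0 → j1 = j2 := by
      intro j1 j2 h1 h2
      by_contra hne
      have hlt : ∀ j, u j ≠ 0 → (p i : ℤ) * u j < (q j : ℤ) := by
        intro j hj
        obtain ⟨j', hj'0, hj'ne⟩ : ∃ j', u j' ≠ 0 ∧ j' ≠ j := by
          rcases eq_or_ne j j1 with rfl | h
          · exact ⟨j2, h2, fun hh => hne hh.symm⟩
          · exact ⟨j1, h1, fun hh => h hh.symm⟩
        have h1' : 1 ≤ u j' := by
          have := (hub j').1; omega
        have hterm' : 1 ≤ (p i : ℤ) * d j' * u j' := by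
          have hpd : 1 ≤ (p i : ℤ) * d j' := by nlinarith [hdpos j', hp1 i]
          nlinarith [hpd, h1']
        have hsum2 : (p i : ℤ) * d j * u j
            + ∑ k ∈ Finset.univ.erase j, (p i : ℤ) * d k * u k = Q := by
          rw [← E]
          exact Finset.add_sum_erase Finset.univ
            (fun k => (p i : ℤ) * d k * u k) (Finset.mem_univ j)
        have hrest : (p i : ℤ) * d j' * u j' ≤
            ∑ k ∈ Finset.univ.erase j, (p i : ℤ) * d k * u k :=
          Finset.single_le_sum (fun k _ => htermnn k)
            (Finset.mem_erase.2 ⟨hj'ne, Finset.mem_univ j'⟩)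
        have hsumsplit : (p i : ℤ) * d j * u j + (p i : ℤ) * d j' * u j' ≤ Q := by
          linarith
        have hQlt : (p i : ℤ) * d j * u j < Q := by linarith
        have hc : ((p i : ℤ) * u j) * d j < (q j : ℤ) * d j := by
          calc ((p i : ℤ) * u j) * d j = (p i : ℤ) * d j * u j := by ring
            _ < Q := hQlt
            _ = (q j : ℤ) * d j := (hd j).symm
        exact lt_of_mul_lt_mul_right hc (le_of_lt (hdpos j))
      have hC := C (p i : ℤ) (le_of_lt (hp1 i))
      rw [Finset.sum_eq_zero (fun j _ => by
        by_cases hj : u j = 0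
        · rw [hj, mul_zero]; exact Int.zero_ediv _
        · exact Int.ediv_eq_zero_of_lt (mul_nonneg (le_of_lt (hp1 i)) (hub j).1) (hlt j hj))] at hC
      rw [Int.ediv_self (ne_of_gt (hp1 i))] at hC
      exact absurd hC (by norm_num)
    obtain ⟨j0, hj0⟩ := hexists
    have hzero : ∀ j, j ≠ j0 → u j = 0 := by
      intro j hjne
      by_contra h
      exact hjne (huniq j j0 h hj0)
    have hsingle : u = Pi.single j0 (u j0) := by
      funext j
      rcases eq_or_ne j j0 with rfl | h
      · simp
      · rw [Pi.single_apply, if_neg h]; exact hzero j h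
    have hE0 : (p i : ℤ) * u j0 = (q j0 : ℤ) := by
      have hsum : ∑ j, (p i : ℤ) * d j * u j = (p i : ℤ) * d j0 * u j0 := by
        rw [Finset.sum_eq_single j0]
        · intro b _ hb; rw [hzero b hb, mul_zero]
        · intro h; exact absurd (Finset.mem_univ j0) h
      rw [hsum] at E
      have : ((p i : ℤ) * u j0) * d j0 = (q j0 : ℤ) * d j0 := by
        rw [hd j0]; rw [← E]; ring
      exact mul_right_cancel₀ (ne_of_gt (hdpos j0)) this
    refine ⟨j0, u j0, ?_, hE0, by rw [hπu]; exact congrArg _ hsingle⟩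
    have := (hub j0).1
    omega
  choose σ a hapos haq hπx using main
  -- injectivity of σ
  have hσinj : Function.Injective σ := by
    intro i1 i2 hσ
    by_contra hne
    have e1 : (p i1 : ℤ) * a i1 = (q (σ i1) : ℤ) := haq i1
    have e2 : (p i2 : ℤ) * a i2 = (q (σ i1) : ℤ) := by rw [hσ]; exact haq i2
    have hmkV : (QuotientAddGroup.mk (Pi.single i1 ((p i1 : ℤ) - 1) + Pi.single i2 ((p i2 : ℤ) - 1)) : StringGroup p)
        = ((p i1 : ℤ) - 1) • xgen p i1 + ((p i2 : ℤ) - 1) • xgen p i2 := by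
      rw [show (QuotientAddGroup.mk (Pi.single i1 ((p i1 : ℤ) - 1) + Pi.single i2 ((p i2 : ℤ) - 1)) : StringGroup p)
        = QuotientAddGroup.mk (Pi.single i1 ((p i1 : ℤ) - 1)) + QuotientAddGroup.mk (Pi.single i2 ((p i2 : ℤ) - 1)) from rfl,
        mk_single, mk_single]
    have hsmulsingle : ∀ (jj : Fin (s+1)) (c e : ℤ),
        c • (Pi.single jj e : Fin (s+1) → ℤ) = Pi.single jj (c * e) := by
      intro jj c e
      funext k; simp [Pi.single_apply, mul_ite]
    have hπV : π (QuotientAddGroup.mk (Pi.single i1 ((p i1 : ℤ) - 1) + Pi.single i2 ((p i2 : ℤ) - 1)))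
        = QuotientAddGroup.mk (Pi.single (σ i1) (((p i1 : ℤ) - 1) * a i1 + ((p i2 : ℤ) - 1) * a i2)) := by
      rw [hmkV, map_add, map_zsmul, map_zsmul, hπx i1, hπx i2, ← hσ,
        ← mk_smul, ← mk_smul, hsmulsingle, hsmulsingle,
        show (QuotientAddGroup.mk (Pi.single (σ i1) (((p i1 : ℤ) - 1) * a i1)) : StringGroup q)
          + QuotientAddGroup.mk (Pi.single (σ i1) (((p i2 : ℤ) - 1) * a i2))
          = QuotientAddGroup.mk (Pi.single (σ i1) (((p i1 : ℤ) - 1) * a i1) + Pi.single (σ i1) (((p i2 : ℤ) - 1) * a i2)) from rfl,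
        ← Pi.single_add]
    have hhtV : ht p (Pi.single i1 ((p i1 : ℤ) - 1) + Pi.single i2 ((p i2 : ℤ) - 1)) = 0 := by
      have hsplit : ∀ k, ((Pi.single i1 ((p i1 : ℤ) - 1) + Pi.single i2 ((p i2 : ℤ) - 1) : Fin (t+1) → ℤ)) k / (p k : ℤ)
          = (Pi.single i1 ((p i1 : ℤ) - 1) : Fin (t+1) → ℤ) k / (p k : ℤ)
            + (Pi.single i2 ((p i2 : ℤ) - 1) : Fin (t+1) → ℤ) k / (p k : ℤ) := by
        intro k
        simp only [Pi.add_apply, Pi.single_apply]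
        split_ifs with h1 h2
        · exact absurd (h1.symm.trans h2) hne
        · simp
        · simp
        · simp
      unfold ht
      rw [Finset.sum_congr rfl (fun k _ => hsplit k), Finset.sum_add_distrib]
      rw [show ∑ k, (Pi.single i1 ((p i1 : ℤ) - 1) : Fin (t+1) → ℤ) k / (p k : ℤ)
            = ht p (Pi.single i1 ((p i1 : ℤ) - 1)) from rfl,
        show ∑ k, (Pi.single i2 ((p i2 : ℤ) - 1) : Fin (t+1) → ℤ) k / (p k : ℤ)
            = ht p (Pi.single i2 ((p i2 : ℤ) - 1)) from rfl,
        ht_single, ht_single]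
      rw [Int.ediv_eq_zero_of_lt (by linarith [hp2 i1]) (by linarith [hp2 i1]),
        Int.ediv_eq_zero_of_lt (by linarith [hp2 i2]) (by linarith [hp2 i2])]
      norm_num
    have h2 := hpres (QuotientAddGroup.mk (Pi.single i1 ((p i1 : ℤ) - 1) + Pi.single i2 ((p i2 : ℤ) - 1)))
    rw [hπV, multp_mk, multq_mk, hhtV, ht_single] at h2
    have h2a : 2 * a i1 ≤ (q (σ i1) : ℤ) := by nlinarith [hapos i1, hp2 i1]
    have h2b : 2 * a i2 ≤ (q (σ i1) : ℤ) := by nlinarith [hapos i2, hp2 i2]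
    have hval : ((p i1 : ℤ) - 1) * a i1 + ((p i2 : ℤ) - 1) * a i2
        = ((q (σ i1) : ℤ) - a i1 - a i2) + 1 * (q (σ i1) : ℤ) := by
      linear_combination e1 + e2
    have hdiv1 : (((p i1 : ℤ) - 1) * a i1 + ((p i2 : ℤ) - 1) * a i2) / (q (σ i1) : ℤ) = 1 := by
      rw [hval, Int.add_mul_ediv_right _ _ (ne_of_gt (hq1 (σ i1))),
        Int.ediv_eq_zero_of_lt (by linarith) (by linarith [hapos i1, hapos i2])]
      norm_num
    rw [hdiv1] at h2
    omega
  -- the rho computation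
  have hrhoπ : ∀ (j : Fin (s+1)) (v : Fin (t+1) → ℤ),
      rho q j (π (QuotientAddGroup.mk v))
        = ∑ i, ((v i * (if j = σ i then a i else 0) : ℤ) : ZMod (q j)) := by
    intro j v
    rw [show (QuotientAddGroup.mk v : StringGroup p) = ∑ i, v i • xgen p i from
      (sum_smul_xgen p v).symm, map_sum, map_sum]
    refine Finset.sum_congr rfl fun i _ => ?_
    rw [map_zsmul, map_zsmul, hπx i, rho_mk, Pi.single_apply]
    rcases eq_or_ne j (σ i) with h | h
    · rw [if_pos h, zsmul_eq_mul]; push_cast; ring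
    · rw [if_neg h]; simp
  -- surjectivity of σ
  have hσsurj : Function.Surjective σ := by
    intro j
    by_contra h
    push_neg at h
    obtain ⟨x, hx, hx1⟩ := hadm.1 j (rho q j) (fun k => rho_xgen q j k) 1
    obtain ⟨g, rfl⟩ := AddMonoidHom.mem_range.1 hx
    obtain ⟨v, rfl⟩ := QuotientAddGroup.mk_surjective g
    rw [hrhoπ] at hx1
    rw [Finset.sum_eq_zero (fun i _ => by
      rw [if_neg (fun hh => h i hh.symm), mul_zero, Int.cast_zero])] at hx1
    haveI : Fact (1 < q j) := ⟨hq j⟩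
    exact zero_ne_one hx1
  -- a i = 1
  have ha1 : ∀ i, a i = 1 := by
    intro i
    obtain ⟨x, hx, hx1⟩ := hadm.1 (σ i) (rho q (σ i)) (fun k => rho_xgen q (σ i) k) 1
    obtain ⟨g, rfl⟩ := AddMonoidHom.mem_range.1 hx
    obtain ⟨v, rfl⟩ := QuotientAddGroup.mk_surjective g
    rw [hrhoπ] at hx1
    rw [Finset.sum_eq_single i (fun b _ hb => by
        rw [if_neg (fun hh => hb (hσinj hh.symm)), mul_zero, Int.cast_zero])
      (fun hmem => absurd (Finset.mem_univ i) hmem), if_pos rfl] at hx1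
    have hdvd : ((q (σ i) : ℤ)) ∣ (v i * a i - 1) := by
      rw [← ZMod.intCast_zmod_eq_zero_iff_dvd]
      push_cast
      push_cast at hx1
      linear_combination hx1
    obtain ⟨k, hk⟩ := hdvd
    have hdvd1 : a i ∣ 1 := ⟨v i - (p i : ℤ) * k, by linear_combination -hk + k * (haq i)⟩
    have h1 := Int.le_of_dvd one_pos hdvd1
    have h2 := hapos i
    omega
  refine ⟨Equiv.ofBijective σ ⟨hσinj, hσsurj⟩, fun i => ?_, fun i => ?_⟩
  · show q (σ i) = p i
    have := haq i
    rw [ha1 i, mul_one] at this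
    exact_mod_cast this.symm
  · show π (xgen p i) = xgen q (σ i)
    rw [hπx i, ha1 i]
    rfl
end

section
/- In the string group L(p) with p_1, p_2 divisible by n, the element (p_1/n)x_1 − (p_2/n)x_2 generates a cyclic subgroup of order exactly n. -/
open scoped BigOperators

theorem stmt11 {t : ℕ} (p : Fin t → ℕ) (hp : ∀ i, 2 ≤ p i)
    (n : ℕ) (hn : 0 < n) (i j : Fin t) (hij : i ≠ j)
    (hi : n ∣ p i) (hj : n ∣ p j) :
    addOrderOf ((p i / n) • xgen p i - (p j / n) • xgen p j) = n := by
  have hpi : 0 < p i := lt_of_lt_of_le two_pos (hp i)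
  -- evaluation-at-i homomorphism into ZMod (p i)
  set ev : (Fin t → ℤ) →+ ZMod (p i) :=
    (Int.castAddHom (ZMod (p i))).comp (Pi.evalAddMonoidHom (fun _ => ℤ) i) with hev
  have hker : AddSubgroup.closure (stringRelators p) ≤ ev.ker := by
    rw [AddSubgroup.closure_le]
    rintro v ⟨a, b, rfl⟩
    simp only [SetLike.mem_coe, AddMonoidHom.mem_ker, hev, AddMonoidHom.comp_apply,
      Pi.evalAddMonoidHom_apply, Pi.sub_apply, Pi.smul_apply, Int.coe_castAddHom,
      smul_eq_mul]
    simp only [Pi.single_apply, mul_ite, mul_one, mul_zero]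
    split_ifs with h1 h2 h2 <;> subst_vars <;> simp
  set Φ : StringGroup p →+ ZMod (p i) := QuotientAddGroup.lift _ ev hker with hΦ
  have hΦmk : ∀ v : Fin t → ℤ, Φ (QuotientAddGroup.mk v) = ((v i : ℤ) : ZMod (p i)) := by
    intro v; rfl
  have hΦi : Φ (xgen p i) = 1 := by
    rw [xgen, hΦmk]; simp
  have hΦj : Φ (xgen p j) = 0 := by
    rw [xgen, hΦmk]; simp [Pi.single_apply, hij.symm]
  set g := (p i / n) • xgen p i - (p j / n) • xgen p j with hg
  have hΦg : Φ g = ((p i / n : ℕ) : ZMod (p i)) := by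
    rw [hg, map_sub, map_nsmul, map_nsmul, hΦi, hΦj, smul_zero, sub_zero, nsmul_eq_mul,
      mul_one]
  -- n • g = 0
  have hng : n • g = 0 := by
    have hrel : ((p i : ℤ) • Pi.single i 1 - (p j : ℤ) • Pi.single j 1 : Fin t → ℤ)
        ∈ AddSubgroup.closure (stringRelators p) :=
      AddSubgroup.subset_closure ⟨i, j, rfl⟩
    have hiz : (n : ℤ) * ((p i / n : ℕ) : ℤ) = (p i : ℤ) := by
      exact_mod_cast congrArg (Nat.cast : ℕ → ℤ) (Nat.mul_div_cancel' hi)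
    have hjz : (n : ℤ) * ((p j / n : ℕ) : ℤ) = (p j : ℤ) := by
      exact_mod_cast congrArg (Nat.cast : ℕ → ℤ) (Nat.mul_div_cancel' hj)
    have hgmk : g = QuotientAddGroup.mk (((p i / n : ℕ) : ℤ) • Pi.single i 1
        - ((p j / n : ℕ) : ℤ) • Pi.single j 1) := by
      rw [hg, QuotientAddGroup.mk_sub, xgen, xgen]
      congr 1 <;> rw [← natCast_zsmul, QuotientAddGroup.mk_nsmul]
    rw [hgmk, ← QuotientAddGroup.mk_nsmul, ← natCast_zsmul, smul_sub, smul_smul, smul_smul,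
      hiz, hjz]
    exact (QuotientAddGroup.eq_zero_iff _).mpr hrel
  have hdvd1 : addOrderOf g ∣ n := addOrderOf_dvd_of_nsmul_eq_zero hng
  have hdvd2 : n ∣ addOrderOf g := by
    have hmap : addOrderOf (Φ g) ∣ addOrderOf g := addOrderOf_map_dvd Φ g
    have horder : addOrderOf (Φ g) = n := by
      rw [hΦg, ZMod.addOrderOf_coe _ hpi.ne']
      have hd : p i / n ∣ p i := Nat.div_dvd_of_dvd hi
      rw [Nat.gcd_eq_right hd, Nat.div_div_self hi hpi.ne']
    rwa [horder] at hmap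
  exact Nat.dvd_antisymm hdvd1 hdvd2
end

section
/- In the string group L(p) with p_1, p_2, p_3 all even, the subgroup generated by (p_1/2)x_1 − (p_2/2)x_2 and (p_1/2)x_1 − (p_3/2)x_3 is isomorphic to the Klein four group C_2 × C_2. -/
open scoped BigOperators

/-- Auxiliary evaluation/reduction homomorphism. -/
def Phi {t : ℕ} (p : Fin t → ℕ) (j k : Fin t) :
    (Fin t → ℤ) →+ ZMod (p j) × ZMod (p k) :=
  AddMonoidHom.mk' (fun v => (((v j : ℤ) : ZMod (p j)), ((v k : ℤ) : ZMod (p k))))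
    (by intro v w; simp [Prod.ext_iff])

lemma Phi_relator {t : ℕ} (p : Fin t → ℕ) (j k : Fin t) :
    AddSubgroup.closure (stringRelators p) ≤ (Phi p j k).ker := by
  rw [AddSubgroup.closure_le]
  rintro v ⟨a, c, rfl⟩
  have key : ∀ m : Fin t,
      ((((p a : ℤ) • Pi.single a 1 - (p c : ℤ) • Pi.single c 1 : Fin t → ℤ) m : ℤ) : ZMod (p m)) = 0 := by
    intro m
    simp only [Pi.sub_apply, Pi.smul_apply, smul_eq_mul, Pi.single_apply]
    split_ifs with h1 h2 h2
    · subst h1; subst h2; push_cast; simp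
    · subst h1; push_cast; simp
    · subst h2; push_cast; simp
    · push_cast; simp
  simp only [SetLike.mem_coe, AddMonoidHom.mem_ker]
  exact Prod.ext (key j) (key k)

theorem stmt12 {t : ℕ} (p : Fin t → ℕ) (hp : ∀ i, 2 ≤ p i)
    (i j k : Fin t) (hij : i ≠ j) (hik : i ≠ k) (hjk : j ≠ k)
    (hi : 2 ∣ p i) (hj : 2 ∣ p j) (hk : 2 ∣ p k) :
    Nonempty
      ((AddSubgroup.closure
        ({(p i / 2) • xgen p i - (p j / 2) • xgen p j,
          (p i / 2) • xgen p i - (p k / 2) • xgen p k} :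
          Set (StringGroup p))) ≃+ ZMod 2 × ZMod 2) := by
  classical
  haveI : NeZero (p j) := ⟨by have := hp j; omega⟩
  haveI : NeZero (p k) := ⟨by have := hp k; omega⟩
  set a : StringGroup p := (p i / 2) • xgen p i - (p j / 2) • xgen p j with ha
  set b : StringGroup p := (p i / 2) • xgen p i - (p k / 2) • xgen p k with hb
  set wa : Fin t → ℤ := (p i / 2) • Pi.single i (1:ℤ) - (p j / 2) • Pi.single j 1 with hwa
  set wb : Fin t → ℤ := (p i / 2) • Pi.single i (1:ℤ) - (p k / 2) • Pi.single k 1 with hwb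
  have mk_smul : ∀ (n : ℕ) (v : Fin t → ℤ),
      (n • (QuotientAddGroup.mk v : StringGroup p)) = QuotientAddGroup.mk (n • v) := by
    intro n v
    exact (map_nsmul (QuotientAddGroup.mk' (AddSubgroup.closure (stringRelators p))) n v).symm
  have hamk : a = QuotientAddGroup.mk wa := by
    rw [ha, hwa, xgen, xgen, mk_smul, mk_smul]; rfl
  have hbmk : b = QuotientAddGroup.mk wb := by
    rw [hb, hwb, xgen, xgen, mk_smul, mk_smul]; rfl
  -- 2 • a = 0 and 2 • b = 0
  have two_smul_w : ∀ (m : Fin t) (hm : 2 ∣ p m),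
      (2 : ℕ) • ((p i / 2) • Pi.single i 1 - (p m / 2) • Pi.single m 1 : Fin t → ℤ)
        = ((p i : ℤ) • Pi.single i 1 - (p m : ℤ) • Pi.single m 1 : Fin t → ℤ) := by
    intro m hm
    rw [smul_sub, smul_smul, smul_smul, Nat.mul_div_cancel' hi, Nat.mul_div_cancel' hm,
      natCast_zsmul, natCast_zsmul]
  have h2a : (2 : ℕ) • a = 0 := by
    rw [hamk, mk_smul, hwa, two_smul_w j hj]
    exact (QuotientAddGroup.eq_zero_iff _).mpr (AddSubgroup.subset_closure ⟨i, j, rfl⟩)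
  have h2b : (2 : ℕ) • b = 0 := by
    rw [hbmk, mk_smul, hwb, two_smul_w k hk]
    exact (QuotientAddGroup.eq_zero_iff _).mpr (AddSubgroup.subset_closure ⟨i, k, rfl⟩)
  have h2a' : (zmultiplesHom (StringGroup p) a) (2 : ℤ) = 0 := by
    simpa [zmultiplesHom, two_zsmul, two_nsmul] using h2a
  have h2b' : (zmultiplesHom (StringGroup p) b) (2 : ℤ) = 0 := by
    simpa [zmultiplesHom, two_zsmul, two_nsmul] using h2b
  -- the homomorphism from the Klein four group
  set fa : ZMod 2 →+ StringGroup p := ZMod.lift 2 ⟨zmultiplesHom (StringGroup p) a, h2a'⟩ with hfa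
  set fb : ZMod 2 →+ StringGroup p := ZMod.lift 2 ⟨zmultiplesHom (StringGroup p) b, h2b'⟩ with hfb
  set g : ZMod 2 × ZMod 2 →+ StringGroup p := fa.coprod fb with hg
  have hfa1 : fa 1 = a := by
    have : ((1 : ℤ) : ZMod 2) = 1 := by norm_cast
    rw [hfa, ← this, ZMod.lift_coe]; simp
  have hfb1 : fb 1 = b := by
    have : ((1 : ℤ) : ZMod 2) = 1 := by norm_cast
    rw [hfb, ← this, ZMod.lift_coe]; simp
  -- the quotient homomorphism detecting a and b
  set phibar : StringGroup p →+ ZMod (p j) × ZMod (p k) :=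
    QuotientAddGroup.lift _ (Phi p j k) (fun v hv => Phi_relator p j k hv) with hphibar
  have phia : phibar a = (-((p j / 2 : ℕ) : ZMod (p j)), 0) := by
    rw [hamk]
    show Phi p j k wa = _
    have h1 : wa j = -((p j / 2 : ℕ) : ℤ) := by
      simp [hwa, Pi.single_apply, hij.symm]
    have h2 : wa k = 0 := by
      simp [hwa, Pi.single_apply, hik.symm, hjk]
    show ((((wa j : ℤ)) : ZMod (p j)), (((wa k : ℤ)) : ZMod (p k))) = _
    rw [h1, h2]
    simp only [Int.cast_neg, Int.cast_natCast, Int.cast_zero]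
  have phib : phibar b = (0, -((p k / 2 : ℕ) : ZMod (p k))) := by
    rw [hbmk]
    show Phi p j k wb = _
    have h1 : wb j = 0 := by
      simp [hwb, Pi.single_apply, hij.symm, hjk.symm]
    have h2 : wb k = -((p k / 2 : ℕ) : ℤ) := by
      simp [hwb, Pi.single_apply, hik.symm]
    show ((((wb j : ℤ)) : ZMod (p j)), (((wb k : ℤ)) : ZMod (p k))) = _
    rw [h1, h2]
    simp only [Int.cast_neg, Int.cast_natCast, Int.cast_zero]
  have hpj2 : ((p j / 2 : ℕ) : ZMod (p j)) ≠ 0 := by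
    intro h
    rw [ZMod.natCast_eq_zero_iff] at h
    have h1 := Nat.le_of_dvd (by have := hp j; omega) h
    have h2 := Nat.div_lt_self (show 0 < p j by have := hp j; omega) one_lt_two
    omega
  have hpk2 : ((p k / 2 : ℕ) : ZMod (p k)) ≠ 0 := by
    intro h
    rw [ZMod.natCast_eq_zero_iff] at h
    have h1 := Nat.le_of_dvd (by have := hp k; omega) h
    have h2 := Nat.div_lt_self (show 0 < p k by have := hp k; omega) one_lt_two
    omega
  have zmod2cases : ∀ m : ZMod 2, m = 0 ∨ m = 1 := by decide
  -- injectivity of g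
  have ginj : Function.Injective g := by
    rw [injective_iff_map_eq_zero]
    rintro ⟨m, n⟩ h0
    rw [hg, AddMonoidHom.coprod_apply] at h0
    rcases zmod2cases m with rfl | rfl <;> rcases zmod2cases n with rfl | rfl
    · rfl
    · exfalso
      rw [map_zero, zero_add, hfb1] at h0
      have := congrArg phibar h0
      rw [phib, map_zero, Prod.ext_iff] at this
      exact hpk2 (neg_eq_zero.mp this.2)
    · exfalso
      rw [map_zero, add_zero, hfa1] at h0
      have := congrArg phibar h0
      rw [phia, map_zero, Prod.ext_iff] at this
      exact hpj2 (neg_eq_zero.mp this.1)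
    · exfalso
      rw [hfa1, hfb1] at h0
      have := congrArg phibar h0
      rw [map_add, phia, phib, map_zero, Prod.ext_iff] at this
      simp only [Prod.fst_add, Prod.snd_add, add_zero, zero_add] at this
      exact hpj2 (neg_eq_zero.mp this.1)
  -- range of g is the closure
  have hrange : g.range = AddSubgroup.closure ({a, b} : Set (StringGroup p)) := by
    apply le_antisymm
    · rintro x ⟨⟨m, n⟩, rfl⟩
      rw [hg, AddMonoidHom.coprod_apply]
      have hamem : a ∈ AddSubgroup.closure ({a, b} : Set (StringGroup p)) :=
        AddSubgroup.subset_closure (Set.mem_insert _ _)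
      have hbmem : b ∈ AddSubgroup.closure ({a, b} : Set (StringGroup p)) :=
        AddSubgroup.subset_closure (Set.mem_insert_of_mem _ rfl)
      rcases zmod2cases m with rfl | rfl <;> rcases zmod2cases n with rfl | rfl <;>
        simp only [map_zero, hfa1, hfb1, zero_add, add_zero] <;>
        first
          | exact zero_mem _
          | exact hamem
          | exact hbmem
          | exact add_mem hamem hbmem
    · rw [AddSubgroup.closure_le]
      rintro x (rfl | rfl)
      · exact ⟨(1, 0), by rw [hg, AddMonoidHom.coprod_apply, hfa1, map_zero, add_zero]⟩
      · exact ⟨(0, 1), by rw [hg, AddMonoidHom.coprod_apply, hfb1, map_zero, zero_add]⟩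
  exact ⟨((AddMonoidHom.ofInjective ginj).trans (AddEquiv.addSubgroupCongr hrange)).symm⟩
end

section
/- Let n divide gcd(p_1, p_2) and let H = ⟨(p_1/n)x_1 − (p_2/n)x_2⟩ ⊆ L(p). Set q = (p_1/n, p_2/n, p_3,...,p_3, ..., p_t,...,p_t) where each p_i (3 ≤ i ≤ t) is repeated n times. Then the assignments π(x_1) = z_{1_1}, π(x_2) = z_{2_1}, and π(x_i) = Σ_{j=1}^n z_{i_j} for 3 ≤ i ≤ t define a well-defined group homomorphism π: L(p) → L(q) whose kernel equals H. -/
open scoped BigOperators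

/-! The relators of `L(p)` are exactly the vectors `a * p` with `∑ a = 0`. Lift `π` to the free
abelian groups as `splitMap`. If `splitMap v = b * q` with `∑ b = 0`, then the weight-one
coordinates of `b` vanish and, as the `p i` with `i ≥ 2` are nonzero, `b` is constant on each
block `{i} × Fin n`; so `b = splitMap c`, and `∑ b = 0` reads `c 0 + c 1 + n * ∑_{i ≥ 2} c i = 0`.
That is what makes `v - c 0 • h` a relator of `L(p)`, where `h = splitDiff n p` lifts the
generator of `H`. Hence the preimage of the relators of `L(q)` is `R_p ⊔ ⟨h⟩`, whose image in
`L(p)` is `H`. -/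

open Finset

lemma mem_closure_stringRelators_iff {ι : Type} [Fintype ι] [DecidableEq ι]
    (p : ι → ℕ) (v : ι → ℤ) :
    v ∈ AddSubgroup.closure (stringRelators p) ↔
      ∃ a : ι → ℤ, ∑ i, a i = 0 ∧ ∀ k, v k = a k * p k := by
  constructor
  · intro hv
    induction hv using AddSubgroup.closure_induction with
    | mem x hx =>
      obtain ⟨i, j, rfl⟩ := hx
      refine ⟨Pi.single i 1 - Pi.single j 1, by simp, fun k => ?_⟩
      by_cases hki : k = i <;> by_cases hkj : k = j <;> simp_all
    | zero => exact ⟨0, by simp, by simp⟩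
    | add x y _ _ hx hy =>
      obtain ⟨a, ha, hxa⟩ := hx
      obtain ⟨b, hb, hyb⟩ := hy
      exact ⟨a + b, by simp [sum_add_distrib, ha, hb], fun k => by simp [hxa, hyb, add_mul]⟩
    | neg x _ hx =>
      obtain ⟨a, ha, hxa⟩ := hx
      exact ⟨-a, by simp [ha], fun k => by simp [hxa]⟩
  · rintro ⟨a, ha, hva⟩
    rcases isEmpty_or_nonempty ι with _ | ⟨⟨i₀⟩⟩
    · simp [Subsingleton.elim v 0]
    -- the terms `a i • p i₀ e i₀` cancel out since `∑ a = 0`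
    have hv : v = ∑ i, a i • ((p i : ℤ) • Pi.single i 1 - (p i₀ : ℤ) • Pi.single i₀ 1) := by
      simp only [smul_sub, sum_sub_distrib, ← sum_smul, ha, zero_smul, sub_zero]
      ext k
      simp [hva, Finset.sum_apply, Pi.single_apply, mul_comm]
    rw [hv]
    refine AddSubgroup.sum_mem _ fun i _ => AddSubgroup.zsmul_mem _ ?_ _
    exact AddSubgroup.subset_closure ⟨i, i₀, rfl⟩

section Split

variable {t : ℕ}

def splitWeights {n : ℕ} (hn : 0 < n) (p : Fin (t+2) → ℕ) : Fin (t+2) × Fin n → ℕ :=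
  fun ij => if (ij.1 : ℕ) < 2 then (if ij.2 = ⟨0, hn⟩ then p ij.1 / n else 1) else p ij.1

def splitMap {n : ℕ} (hn : 0 < n) : (Fin (t+2) → ℤ) →+ (Fin (t+2) × Fin n → ℤ) where
  toFun v ij := if (ij.1 : ℕ) < 2 then (if ij.2 = ⟨0, hn⟩ then v ij.1 else 0) else v ij.1
  map_zero' := by ext; simp
  map_add' v w := by ext; simp only [Pi.add_apply]; split_ifs <;> simp

def splitDiff (n : ℕ) (p : Fin (t+2) → ℕ) : Fin (t+2) → ℤ :=
  (p 0 / n) • Pi.single 0 1 - (p 1 / n) • Pi.single 1 1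

variable {n : ℕ} {hn : 0 < n} {i : Fin (t+2)}

lemma splitWeights_of_lt (p : Fin (t+2) → ℕ) (hi : (i : ℕ) < 2) (j : Fin n) :
    splitWeights hn p (i, j) = if j = ⟨0, hn⟩ then p i / n else 1 := if_pos hi

lemma splitWeights_of_le (p : Fin (t+2) → ℕ) (hi : 2 ≤ (i : ℕ)) (j : Fin n) :
    splitWeights hn p (i, j) = p i := if_neg hi.not_gt

lemma splitMap_of_lt (v : Fin (t+2) → ℤ) (hi : (i : ℕ) < 2) (j : Fin n) :
    splitMap hn v (i, j) = if j = ⟨0, hn⟩ then v i else 0 := if_pos hi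

lemma splitMap_of_le (v : Fin (t+2) → ℤ) (hi : 2 ≤ (i : ℕ)) (j : Fin n) :
    splitMap hn v (i, j) = v i := if_neg hi.not_gt

lemma splitMap_single_of_lt (hi : (i : ℕ) < 2) :
    splitMap hn (Pi.single i 1) = Pi.single (i, ⟨0, hn⟩) 1 := by
  ext ⟨k, j⟩
  rcases lt_or_ge (k : ℕ) 2 with hk | hk
  · by_cases hki : k = i <;> by_cases hj : j = ⟨0, hn⟩ <;> simp_all [splitMap_of_lt]
  · have hki : k ≠ i := by rintro rfl; omega
    simp [splitMap_of_le _ hk, hki]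

lemma splitMap_single_of_le (hi : 2 ≤ (i : ℕ)) :
    splitMap hn (Pi.single i 1) = ∑ j, Pi.single (i, j) 1 := by
  ext ⟨k, j⟩
  rcases lt_or_ge (k : ℕ) 2 with hk | hk
  · have hki : k ≠ i := by rintro rfl; omega
    simp [splitMap_of_lt _ hk, hki, Finset.sum_apply]
  · rw [splitMap_of_le _ hk]
    by_cases hki : k = i <;> simp [hki, Finset.sum_apply, Pi.single_apply]

lemma sum_splitMap_row (v : Fin (t+2) → ℤ) (i : Fin (t+2)) :
    ∑ j, splitMap hn v (i, j) = if (i : ℕ) < 2 then v i else n * v i := by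
  split_ifs with hi
  · simp [splitMap_of_lt _ hi]
  · simp [splitMap_of_le _ (not_lt.1 hi)]

lemma Fin.sum_univ_succ_succ {M : Type} [AddCommMonoid M] (f : Fin (t+2) → M) :
    ∑ i, f i = f 0 + f 1 + ∑ i : Fin t, f i.succ.succ := by
  simp [Fin.sum_univ_succ, add_assoc]

lemma sum_splitMap (v : Fin (t+2) → ℤ) :
    ∑ ij, splitMap hn v ij = v 0 + v 1 + n * ∑ i : Fin t, v i.succ.succ := by
  simp [Fintype.sum_prod_type, sum_splitMap_row, Fin.sum_univ_succ_succ, Finset.mul_sum, Fin.val_succ]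

variable {p : Fin (t+2) → ℕ}

lemma closure_le_comap_splitMap (hdvd : ∀ i : Fin (t+2), (i : ℕ) < 2 → n ∣ p i) :
    AddSubgroup.closure (stringRelators p) ≤
      (AddSubgroup.closure (stringRelators (splitWeights hn p))).comap (splitMap hn) := by
  intro v hv
  obtain ⟨a, ha, hva⟩ := (mem_closure_stringRelators_iff p v).1 hv
  refine (mem_closure_stringRelators_iff _ _).2
    ⟨splitMap hn fun i => if (i : ℕ) < 2 then n * a i else a i, ?_, ?_⟩
  · rw [Fin.sum_univ_succ_succ] at ha
    simpa [sum_splitMap, Fin.val_succ, mul_add] using congrArg ((n : ℤ) * ·) ha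
  · rintro ⟨i, j⟩
    rcases lt_or_ge (i : ℕ) 2 with hi | hi
    · simp only [splitMap_of_lt _ hi, splitWeights_of_lt _ hi, hi]
      split_ifs
      · have hpi : (p i : ℤ) = n * (p i / n : ℕ) := by
          exact_mod_cast (Nat.mul_div_cancel' (hdvd i hi)).symm
        rw [hva, hpi]; ring
      · simp
    · simp [splitMap_of_le _ hi, splitWeights_of_le _ hi, hva, show ¬ (i : ℕ) ≤ 1 by omega]

lemma splitMap_splitDiff_mem (p : Fin (t+2) → ℕ) :
    splitMap hn (splitDiff n p) ∈ AddSubgroup.closure (stringRelators (splitWeights hn p)) := by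
  have h0 : ((0 : Fin (t+2)) : ℕ) < 2 := by simp
  have h1 : ((1 : Fin (t+2)) : ℕ) < 2 := by simp
  refine AddSubgroup.subset_closure ⟨(0, ⟨0, hn⟩), (1, ⟨0, hn⟩), ?_⟩
  rw [splitDiff, map_sub, map_nsmul, map_nsmul, splitMap_single_of_lt h0,
    splitMap_single_of_lt h1, splitWeights_of_lt _ h0, splitWeights_of_lt _ h1, if_pos rfl,
    if_pos rfl, natCast_zsmul, natCast_zsmul]

lemma eq_splitMap_of_splitMap_eq_mul (hp : ∀ i : Fin (t+2), 2 ≤ (i : ℕ) → p i ≠ 0)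
    {v : Fin (t+2) → ℤ} {b : Fin (t+2) × Fin n → ℤ}
    (hb : ∀ ij, splitMap hn v ij = b ij * splitWeights hn p ij) :
    b = splitMap hn fun i => b (i, ⟨0, hn⟩) := by
  ext ⟨i, j⟩
  rcases lt_or_ge (i : ℕ) 2 with hi | hi
  · rw [splitMap_of_lt _ hi]
    split_ifs with hj
    · rw [hj]
    · simpa [splitMap_of_lt _ hi, splitWeights_of_lt _ hi, hj] using (hb (i, j)).symm
  · have hj := hb (i, j)
    have h0 := hb (i, ⟨0, hn⟩)
    rw [splitMap_of_le _ hi, splitWeights_of_le _ hi] at hj h0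
    rw [splitMap_of_le _ hi]
    exact mul_right_cancel₀ (by exact_mod_cast hp i hi) (hj.symm.trans h0)

lemma sub_zsmul_splitDiff_mem_closure (hdvd : n ∣ p 1) {v c : Fin (t+2) → ℤ}
    (hc : c 0 + c 1 + n * ∑ i : Fin t, c i.succ.succ = 0)
    (hv : ∀ i, v i = c i * (if (i : ℕ) < 2 then p i / n else p i : ℕ)) :
    v - c 0 • splitDiff n p ∈ AddSubgroup.closure (stringRelators p) := by
  set S := ∑ i : Fin t, c i.succ.succ
  refine (mem_closure_stringRelators_iff p _).2
    ⟨Fin.cons 0 (Fin.cons (-S) fun i => c i.succ.succ), by simp [Fin.sum_cons, S], ?_⟩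
  have hp1 : (p 1 : ℤ) = n * (p 1 / n : ℕ) := by exact_mod_cast (Nat.mul_div_cancel' hdvd).symm
  refine Fin.cases ?_ (Fin.cases ?_ fun i => ?_)
  · simp [hv, splitDiff]
  · have hd1 : splitDiff n p 1 = -((p 1 / n : ℕ) : ℤ) := by simp [splitDiff, -Int.natCast_ediv]
    rw [Fin.cons_succ, Fin.cons_zero, Fin.succ_zero_eq_one, Pi.sub_apply, Pi.smul_apply, hd1,
      hv, if_pos (by simp), smul_eq_mul, hp1]
    linear_combination ((p 1 / n : ℕ) : ℤ) * hc
  · simp [hv, splitDiff, Fin.val_succ, Fin.ext_iff]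

lemma comap_splitMap_closure (hp : ∀ i : Fin (t+2), 2 ≤ (i : ℕ) → p i ≠ 0)
    (hdvd : ∀ i : Fin (t+2), (i : ℕ) < 2 → n ∣ p i) :
    (AddSubgroup.closure (stringRelators (splitWeights hn p))).comap (splitMap hn) =
      AddSubgroup.closure (stringRelators p) ⊔ AddSubgroup.zmultiples (splitDiff n p) := by
  refine le_antisymm (fun v hv => ?_) (sup_le (closure_le_comap_splitMap hdvd) ?_)
  · obtain ⟨b, hb, hvb⟩ := (mem_closure_stringRelators_iff _ _).1 (AddSubgroup.mem_comap.1 hv)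
    rw [eq_splitMap_of_splitMap_eq_mul hp hvb, sum_splitMap] at hb
    have hv' := sub_zsmul_splitDiff_mem_closure (hdvd 1 (by simp)) hb fun i => by
      simpa [splitMap, splitWeights] using hvb (i, ⟨0, hn⟩)
    rw [← sub_add_cancel v (b (0, ⟨0, hn⟩) • splitDiff n p)]
    exact add_mem (AddSubgroup.mem_sup_left hv')
      (AddSubgroup.mem_sup_right (AddSubgroup.zsmul_mem_zmultiples _ _))
  · exact AddSubgroup.zmultiples_le.2 (splitMap_splitDiff_mem p)

end Split

theorem stmt16 {t n : ℕ} (hn : 0 < n) (p : Fin (t+2) → ℕ) (hp : ∀ i, 2 ≤ p i)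
    (hdvd : n ∣ Nat.gcd (p 0) (p 1))
    (q : Fin (t+2) × Fin n → ℕ)
    (hq : ∀ ij : Fin (t+2) × Fin n,
      q ij = if (ij.1 : ℕ) < 2 then (if ij.2 = ⟨0, hn⟩ then p ij.1 / n else 1) else p ij.1) :
    ∃ π : StringGroup p →+ StringGroup q,
      π (xgen p 0) = xgen q (0, ⟨0, hn⟩) ∧
      π (xgen p 1) = xgen q (1, ⟨0, hn⟩) ∧
      (∀ i : Fin (t+2), 2 ≤ (i : ℕ) → π (xgen p i) = ∑ j : Fin n, xgen q (i, j)) ∧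
      π.ker = AddSubgroup.zmultiples ((p 0 / n) • xgen p 0 - (p 1 / n) • xgen p 1) := by
  obtain rfl : q = splitWeights hn p := funext hq
  have hp' : ∀ i : Fin (t+2), 2 ≤ (i : ℕ) → p i ≠ 0 := fun i _ => by have := hp i; omega
  have hdvd' : ∀ i : Fin (t+2), (i : ℕ) < 2 → n ∣ p i := fun i hi => by
    obtain rfl | rfl : i = 0 ∨ i = 1 := by simp only [Fin.ext_iff, Fin.val_zero, Fin.val_one]; omega
    exacts [hdvd.trans (Nat.gcd_dvd_left _ _), hdvd.trans (Nat.gcd_dvd_right _ _)]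
  refine ⟨QuotientAddGroup.map _ _ (splitMap hn) (closure_le_comap_splitMap hdvd'),
    ?_, ?_, fun i hi => ?_, ?_⟩
  · exact congrArg _ (splitMap_single_of_lt (by simp))
  · exact congrArg _ (splitMap_single_of_lt (by simp))
  · rw [xgen, QuotientAddGroup.map_mk, splitMap_single_of_le hi]
    exact map_sum (QuotientAddGroup.mk' _) _ _
  · rw [QuotientAddGroup.ker_map, comap_splitMap_closure hp' hdvd', AddSubgroup.map_sup,
      QuotientAddGroup.map_mk'_self, bot_sup_eq, AddMonoidHom.map_zmultiples]
    rfl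
end

section
/- Define f(x) = ((x+1)/(x−1))^2 for x ≠ 1 in an algebraically closed field k of characteristic 0, and for λ ∈ k \ {0,1} let Γ(λ) = {λ, 1/λ, 1−λ, 1/(1−λ), λ/(λ−1), (λ−1)/λ}. Then for any λ ∈ k \ {0,1} and any square root μ of λ with μ ≠ ±1, we have f(√f(μ)) ∈ Γ(λ) for a suitable choice of square root; more precisely f(ν) = λ or 1/λ whenever ν^2 = f(μ) and μ^2 = λ. -/
/-! Write `f = c²` with `c x = (x + 1)/(x - 1)`. The Möbius map `c` is an involution and
`c (-x) = (c x)⁻¹`. From `ν² = c(μ)²` we get `ν = ±c(μ)`, hence `c ν = μ` or `c ν = μ⁻¹`,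
and squaring gives `f ν = λ` or `λ⁻¹`. -/

def cayley {K : Type*} [DivisionRing K] (x : K) : K := (x + 1) / (x - 1)

theorem cayley_neg {K : Type*} [DivisionRing K] (x : K) : cayley (-x) = (cayley x)⁻¹ := by
  rw [cayley, cayley, inv_div, ← neg_div_neg_eq, neg_add', neg_sub', neg_neg, sub_neg_eq_add]

theorem cayley_cayley {K : Type*} [Field K] [NeZero (2 : K)] {x : K} (hx : x ≠ 1) :
    cayley (cayley x) = x := by
  have hx' : x - 1 ≠ 0 := sub_ne_zero.mpr hx
  rw [cayley, cayley, div_add_one hx', div_sub_one hx', div_div_div_cancel_right₀ hx',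
    show x + 1 + (x - 1) = 2 * x by ring, show x + 1 - (x - 1) = 2 by ring]
  exact mul_div_cancel_left₀ x two_ne_zero

theorem stmt17_general {k : Type} [Field k] [CharZero k]
    (lam mu nu : k)
    (hmu : mu ^ 2 = lam) (hmu1 : mu ≠ 1)
    (hnu : nu ^ 2 = ((mu + 1) / (mu - 1)) ^ 2) :
    ((nu + 1) / (nu - 1)) ^ 2 = lam ∨ ((nu + 1) / (nu - 1)) ^ 2 = lam⁻¹ := by
  change nu ^ 2 = cayley mu ^ 2 at hnu
  change cayley nu ^ 2 = lam ∨ cayley nu ^ 2 = lam⁻¹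
  rcases sq_eq_sq_iff_eq_or_eq_neg.mp hnu with rfl | rfl
  · left
    rw [cayley_cayley hmu1, hmu]
  · right
    rw [cayley_neg, cayley_cayley hmu1, inv_pow, hmu]

theorem stmt17 {k : Type} [Field k] [IsAlgClosed k] [CharZero k]
    (lam mu nu : k) (h0 : lam ≠ 0) (h1 : lam ≠ 1)
    (hmu : mu ^ 2 = lam) (hmu1 : mu ≠ 1) (hmu2 : mu ≠ -1)
    (hnu : nu ^ 2 = ((mu + 1) / (mu - 1)) ^ 2) :
    ((nu + 1) / (nu - 1)) ^ 2 = lam ∨ ((nu + 1) / (nu - 1)) ^ 2 = lam⁻¹ :=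
  stmt17_general lam mu nu hmu hmu1 hnu
end
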